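/- arXiv:2409.12630 — 8 statements merged into one kernel-verified Lean document; each statement's English description precedes it below -/
import Mathlib

section
/- Consider the convex program P: minimize cᵀx over x ∈ ℝⁿ subject to x ∈ 𝒳_i for every i ∈ [m], where c ∈ ℝⁿ, each 𝒳_i ⊆ ℝⁿ is closed and convex, the feasible set ⋂_{i∈[m]} 𝒳_i is nonempty, and the infimum of cᵀx over the feasible set is finite and attained. Then the number of support constraints of P is at most n. -/
/-!
If more than `finrank ℝ E` constraints were support constraints, shrink each witness towards the
optimum `x0` so that all of them lie on one level set `f = a` with `a < f x0`. Points in a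
hyperplane are affinely dependent once there are more than `finrank ℝ E` of them, so Radon's
theorem splits them into two parts whose convex hulls meet. Each constraint excludes at most one
of the points, hence contains one of the two parts entirely, so the common point is feasible at
level `a < f x0`, contradicting optimality.
-/

open Set Module

section LevelSet

variable {k E ι : Type*} [Field k] [AddCommGroup E] [Module k E] [FiniteDimensional k E]

theorem not_affineIndependent_of_forall_apply_eq [Finite ι] {f : E →ₗ[k] k} (hf : f ≠ 0)
    {y : ι → E} {a : k} (hy : ∀ t, f (y t) = a) (hcard : finrank k E < Nat.card ι) :
    ¬AffineIndependent k y := by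
  intro hind
  have : Fintype ι := Fintype.ofFinite ι
  have hspan : vectorSpan k (range y) ≤ LinearMap.ker f := by
    rw [vectorSpan_def, Submodule.span_le]
    rintro _ ⟨_, ⟨s, rfl⟩, _, ⟨t, rfl⟩, rfl⟩
    simp [hy]
  have hker : finrank k (LinearMap.ker f) < finrank k E :=
    Submodule.finrank_lt (by rwa [ne_eq, LinearMap.ker_eq_top])
  have := hind.card_le_finrank_succ
  have := Submodule.finrank_mono hspan
  rw [Nat.card_eq_fintype_card] at hcard
  omega

end LevelSet

section OrderedField

variable {𝕜 E ι κ : Type*} [Field 𝕜] [LinearOrder 𝕜] [IsStrictOrderedRing 𝕜]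
  [AddCommGroup E] [Module 𝕜 E]

theorem exists_mem_convexHull_forall_mem_of_not_affineIndependent {y : ι → E}
    (hy : ¬AffineIndependent 𝕜 y) {X : κ → Set E} (hX : ∀ i, Convex 𝕜 (X i))
    (hout : ∀ i, {t | y t ∉ X i}.Subsingleton) :
    ∃ p ∈ convexHull 𝕜 (range y), ∀ i, p ∈ X i := by
  obtain ⟨I, p, hpI, hpIc⟩ := Convex.radon_partition hy
  refine ⟨p, convexHull_mono (image_subset_range _ _) hpI, fun i => ?_⟩
  by_cases hI : ∀ t ∈ I, y t ∈ X i
  · exact convexHull_min (by rintro _ ⟨t, ht, rfl⟩; exact hI t ht) (hX i) hpI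
  · push Not at hI
    obtain ⟨s, hs, hsX⟩ := hI
    refine convexHull_min ?_ (hX i) hpIc
    rintro _ ⟨t, ht, rfl⟩
    by_contra htX
    exact ht (hout i htX hsX ▸ hs)

theorem exists_mem_segment_apply_eq (f : E →ₗ[𝕜] 𝕜) {x w : E} {a : 𝕜} (hw : f w ≤ a)
    (hx : a ≤ f x) : ∃ y ∈ segment 𝕜 x w, f y = a := by
  have : a ∈ f.toAffineMap '' segment 𝕜 x w := by
    rw [image_segment, LinearMap.coe_toAffineMap, segment_symm, segment_eq_Icc (hw.trans hx)]
    exact ⟨hw, hx⟩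
  simpa using this

end OrderedField

section SupportConstraints

variable {E κ : Type*} [AddCommGroup E] [Module ℝ E]

/-- Support constraints of `min {f x | ∀ i, x ∈ X i}`, measured against an optimal point `x0`:
the infimum drops without constraint `k` iff a point satisfying the others lies below `f x0`. -/
def supportConstraints (f : E →ₗ[ℝ] ℝ) (X : κ → Set E) (x0 : E) : Set κ :=
  {k | ∃ x, (∀ i, i ≠ k → x ∈ X i) ∧ f x < f x0}

theorem ncard_supportConstraints_le_finrank [FiniteDimensional ℝ E] [Finite κ]
    (f : E →ₗ[ℝ] ℝ) {X : κ → Set E} (hX : ∀ i, Convex ℝ (X i)) {x0 : E} (hx0 : ∀ i, x0 ∈ X i)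
    (hopt : ∀ x, (∀ i, x ∈ X i) → f x0 ≤ f x) :
    (supportConstraints f X x0).ncard ≤ finrank ℝ E := by
  by_contra! hcard
  set S := supportConstraints f X x0
  rw [← Nat.card_coe_set_eq] at hcard
  choose w hwX hwlt using fun t : S => t.2
  have : Nonempty S := Nat.card_pos_iff.1 (Nat.zero_lt_of_lt hcard) |>.1
  obtain ⟨t0, ht0⟩ := Finite.exists_max fun t => f (w t)
  choose y hyseg hyf using fun t => exists_mem_segment_apply_eq f (ht0 t) (hwlt t0).le
  have hout : ∀ i, {t | y t ∉ X i}.Subsingleton := by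
    have hexcluded : ∀ (t : S) i, y t ∉ X i → (t : κ) = i := fun t i hyt => by_contra fun h =>
      hyt ((hX i).segment_subset (hx0 i) (hwX t i (Ne.symm h)) (hyseg t))
    intro i s hs t ht
    exact Subtype.ext ((hexcluded s i hs).trans (hexcluded t i ht).symm)
  have hf : f ≠ 0 := fun h => by simpa [h] using hwlt t0
  obtain ⟨p, hp, hpX⟩ := exists_mem_convexHull_forall_mem_of_not_affineIndependent
    (not_affineIndependent_of_forall_apply_eq hf hyf hcard) hX hout
  have hfp : f p = f (w t0) :=
    convexHull_min (range_subset_iff.2 hyf) (convex_hyperplane f.isLinear _) hp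
  linarith [hopt p hpX, hwlt t0]

end SupportConstraints

theorem stmt_0_general (n m : ℕ) (c : Fin n → ℝ) (X : Fin m → Set (Fin n → ℝ))
    (hconv : ∀ i, Convex ℝ (X i))
    (x0 : Fin n → ℝ) (hx0 : x0 ∈ ⋂ i, X i)
    (hopt : ∀ x ∈ ⋂ i, X i, (∑ j, c j * x0 j) ≤ ∑ j, c j * x j) :
    {k : Fin m | ∃ x : Fin n → ℝ, (∀ i, i ≠ k → x ∈ X i) ∧
      (∑ j, c j * x j) < ∑ j, c j * x0 j}.ncard ≤ n := by
  have := ncard_supportConstraints_le_finrank (dotProductBilin ℝ ℝ c) hconv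
    (mem_iInter.1 hx0) fun x hx => hopt x (mem_iInter.2 hx)
  exact this.trans_eq (finrank_fin_fun ℝ)

/-- For the convex program `min cᵀx s.t. x ∈ 𝒳ᵢ, i ∈ [m]` with closed convex
constraint sets, nonempty feasible set and attained finite optimum (attained at `x0`), the number
of support constraints (constraints whose removal strictly improves the optimal value, i.e. there
is a point feasible for all other constraints with strictly smaller objective) is at most `n`. -/
theorem stmt_0 (n m : ℕ) (c : Fin n → ℝ) (X : Fin m → Set (Fin n → ℝ))
    (hclosed : ∀ i, IsClosed (X i)) (hconv : ∀ i, Convex ℝ (X i))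
    (x0 : Fin n → ℝ) (hx0 : x0 ∈ ⋂ i, X i)
    (hopt : ∀ x ∈ ⋂ i, X i, (∑ j, c j * x0 j) ≤ ∑ j, c j * x j) :
    {k : Fin m | ∃ x : Fin n → ℝ, (∀ i, i ≠ k → x ∈ X i) ∧
      (∑ j, c j * x j) < ∑ j, c j * x0 j}.ncard ≤ n :=
  stmt_0_general n m c X hconv x0 hx0 hopt
end

section
/- Let k ∈ ℕ with k ≥ n_ξ + 1. Then for every x ∈ X one has inf over k-tuples (y¹,…,y^k) ∈ Y(x)^k of sup_{ξ∈U} min_{i∈[k]} f(x,y^i,ξ) equal to sup_{ξ∈U} min_{y∈Y(x)} f(x,y,ξ). Consequently opt(k) = opt(2RO), and a first-stage decision x ∈ X attains the optimal value of the k-adaptability problem if and only if it attains the optimal value of the two-stage robust problem. -/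
/-- Worst-case value `sup_{ξ ∈ U} min_{y ∈ S} F(y, ξ)` (minimum written as `sInf` of the image,
which is the minimum for a finite nonempty `S`). -/
noncomputable def worstVal {Eξ Ey : Type*} (U : Set Eξ) (S : Set Ey) (F : Ey → Eξ → ℝ) : ℝ :=
  sSup ((fun ξ => sInf ((fun y => F y ξ) '' S)) '' U)

/-- The `k`-adaptability value for a fixed first stage:
`inf_{y¹,…,y^k ∈ S} sup_{ξ ∈ U} min_{i ∈ [k]} F(yⁱ, ξ)`. -/
noncomputable def kVal {Eξ Ey : Type*} (U : Set Eξ) (S : Set Ey) (F : Ey → Eξ → ℝ) (k : ℕ) : ℝ :=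
  sInf {v | ∃ y : Fin k → Ey, (∀ i, y i ∈ S) ∧ v = worstVal U (Set.range y) F}

/-!
Fix `x`. Every `k`-tuple of second-stage decisions is a subfamily of `Y(x)`, so its worst-case
value is at least the full one. Conversely, the worst case of a subfamily `T` exceeds `w` exactly
when the superlevel sets `{ξ ∈ U | w < f(x, y, ξ)}`, `y ∈ T`, have a common point; these sets are
convex by concavity, so by Helly's theorem they have a common point as soon as every `n_ξ + 1` of
them do, and `k ≥ n_ξ + 1` turns this into the reverse inequality. The statements on optimal
values and optimal first stages then hold because the two objectives agree pointwise on `X`.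
-/

open Set Module

lemma Finset.exists_fin_tuple_superset {ι : Type*} {I : Finset ι} {S : Set ι} (hIS : ↑I ⊆ S)
    {y₀ : ι} (hy₀ : y₀ ∈ S) {k : ℕ} (hk : I.card ≤ k) :
    ∃ y : Fin k → ι, (∀ i, y i ∈ S) ∧ ↑I ⊆ Set.range y := by
  refine ⟨fun i => if h : (i : ℕ) < I.card then I.equivFin.symm ⟨i, h⟩ else y₀, ?_, ?_⟩
  · intro i
    dsimp only
    split_ifs
    exacts [hIS (Finset.coe_mem _), hy₀]
  · intro a ha
    refine ⟨Fin.castLE hk (I.equivFin ⟨a, ha⟩), ?_⟩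
    simp

section KAdaptability

variable {ι E : Type*} {U : Set E} {S T : Set ι} {F : ι → E → ℝ}

lemma lt_worstVal_iff (hT : T.Finite) (hTne : T.Nonempty) (hU : U.Nonempty)
    (hbdd : ∀ y ∈ T, BddAbove (F y '' U)) (w : ℝ) :
    w < worstVal U T F ↔ ∃ ξ ∈ U, ∀ y ∈ T, w < F y ξ := by
  obtain ⟨y₀, hy₀⟩ := id hTne
  obtain ⟨M, hM⟩ := hbdd y₀ hy₀
  have hbddMin : BddAbove ((fun ξ => sInf ((fun y => F y ξ) '' T)) '' U) := by
    refine ⟨M, forall_mem_image.2 fun ξ hξ => ?_⟩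
    exact (csInf_le (hT.image _).bddBelow (mem_image_of_mem _ hy₀)).trans (hM ⟨ξ, hξ, rfl⟩)
  simp only [worstVal, lt_csSup_iff hbddMin (hU.image _), exists_mem_image,
    (hT.image _).lt_csInf_iff (hTne.image _), forall_mem_image]

lemma worstVal_le_worstVal_of_subset (hTS : T ⊆ S) (hS : S.Finite) (hTne : T.Nonempty)
    (hU : U.Nonempty) (hbdd : ∀ y ∈ S, BddAbove (F y '' U)) :
    worstVal U S F ≤ worstVal U T F := by
  refine le_of_forall_lt fun w hw => ?_
  obtain ⟨ξ, hξ, hwξ⟩ := (lt_worstVal_iff hS (hTne.mono hTS) hU hbdd w).1 hw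
  exact (lt_worstVal_iff (hS.subset hTS) hTne hU (fun y hy => hbdd y (hTS hy)) w).2
    ⟨ξ, hξ, fun y hy => hwξ y (hTS hy)⟩

variable [AddCommGroup E] [Module ℝ E] [FiniteDimensional ℝ E]

lemma exists_fin_tuple_worstVal_le (hU : U.Nonempty) (hS : S.Finite) (hSne : S.Nonempty)
    (hbdd : ∀ y ∈ S, BddAbove (F y '' U))
    (hconc : ∀ y ∈ S, ConcaveOn ℝ U (F y)) {k : ℕ} (hk : finrank ℝ E + 1 ≤ k) :
    ∃ y : Fin k → ι, (∀ i, y i ∈ S) ∧ worstVal U (range y) F ≤ worstVal U S F := by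
  classical
  by_contra! hlt
  set w := worstVal U S F
  have : NeZero k := ⟨by omega⟩
  obtain ⟨y₀, hy₀⟩ := id hSne
  have hHelly : (⋂ y ∈ hS.toFinset, {ξ ∈ U | w < F y ξ}).Nonempty := by
    refine Convex.helly_theorem' (fun y hy => (hconc y (hS.mem_toFinset.1 hy)).convex_gt w) ?_
    intro I hI hIcard
    obtain ⟨t, htS, hIt⟩ := I.exists_fin_tuple_superset
      (fun a ha => hS.mem_toFinset.1 (hI ha)) hy₀ (hIcard.trans hk)
    obtain ⟨ξ, hξ, hwξ⟩ := (lt_worstVal_iff (finite_range t) (range_nonempty t) hU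
      (forall_mem_range.2 fun i => hbdd _ (htS i)) w).1 (hlt t htS)
    exact ⟨ξ, mem_iInter₂.2 fun y hy => ⟨hξ, hwξ y (hIt hy)⟩⟩
  obtain ⟨ξ, hξ⟩ := hHelly
  have hwξ : ∀ y ∈ S, ξ ∈ U ∧ w < F y ξ := fun y hy => mem_iInter₂.1 hξ y (hS.mem_toFinset.2 hy)
  exact lt_irrefl w ((lt_worstVal_iff hS hSne hU hbdd w).2
    ⟨ξ, (hwξ y₀ hy₀).1, fun y hy => (hwξ y hy).2⟩)

theorem kVal_eq_worstVal (hU : U.Nonempty) (hS : S.Finite) (hSne : S.Nonempty)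
    (hbdd : ∀ y ∈ S, BddAbove (F y '' U))
    (hconc : ∀ y ∈ S, ConcaveOn ℝ U (F y)) {k : ℕ} (hk : finrank ℝ E + 1 ≤ k) :
    kVal U S F k = worstVal U S F := by
  obtain ⟨t, htS, hle⟩ := exists_fin_tuple_worstVal_le hU hS hSne hbdd hconc hk
  have hbelow : ∀ t : Fin k → ι, (∀ i, t i ∈ S) → worstVal U S F ≤ worstVal U (range t) F :=
    fun t htS => worstVal_le_worstVal_of_subset (range_subset_iff.2 htS) hS
      (range_nonempty_iff_nonempty.2 ⟨⟨0, by omega⟩⟩) hU hbdd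
  refine IsLeast.csInf_eq ⟨⟨t, htS, (le_antisymm hle (hbelow t htS)).symm⟩, ?_⟩
  rintro _ ⟨t', ht'S, rfl⟩
  exact hbelow t' ht'S

end KAdaptability

theorem stmt_1_general (nx ny nξ : ℕ)
    (X : Set (EuclideanSpace ℝ (Fin nx)))
    (Y : Set (EuclideanSpace ℝ (Fin ny))) (hYfin : Y.Finite)
    (Yx : EuclideanSpace ℝ (Fin nx) → Set (EuclideanSpace ℝ (Fin ny)))
    (hYxsub : ∀ x ∈ X, Yx x ⊆ Y) (hYxne : ∀ x ∈ X, (Yx x).Nonempty)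
    (U : Set (EuclideanSpace ℝ (Fin nξ))) (hUcomp : IsCompact U)
    (hUne : U.Nonempty)
    (f : EuclideanSpace ℝ (Fin nx) → EuclideanSpace ℝ (Fin ny) →
      EuclideanSpace ℝ (Fin nξ) → ℝ)
    (hfcont : Continuous fun p : EuclideanSpace ℝ (Fin nx) × EuclideanSpace ℝ (Fin ny) ×
      EuclideanSpace ℝ (Fin nξ) => f p.1 p.2.1 p.2.2)
    (hconc : ∀ x ∈ X, ∀ y ∈ Y, ConcaveOn ℝ U (f x y))
    (k : ℕ) (hk : nξ + 1 ≤ k) :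
    (∀ x ∈ X, kVal U (Yx x) (f x) k = worstVal U (Yx x) (f x)) ∧
    sInf ((fun x => kVal U (Yx x) (f x) k) '' X) =
      sInf ((fun x => worstVal U (Yx x) (f x)) '' X) ∧
    (∀ x ∈ X,
      kVal U (Yx x) (f x) k = sInf ((fun x' => kVal U (Yx x') (f x') k) '' X) ↔
      worstVal U (Yx x) (f x) = sInf ((fun x' => worstVal U (Yx x') (f x')) '' X)) := by
  have hpointwise : ∀ x ∈ X, kVal U (Yx x) (f x) k = worstVal U (Yx x) (f x) := by
    intro x hx
    have hbdd : ∀ y ∈ Yx x, BddAbove (f x y '' U) := fun y _ =>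
      hUcomp.bddAbove_image (hfcont.comp (f := fun ξ => (x, y, ξ)) (by fun_prop)).continuousOn
    exact kVal_eq_worstVal hUne (hYfin.subset (hYxsub x hx)) (hYxne x hx) hbdd
      (fun y hy => hconc x hx y (hYxsub x hx hy)) (by rwa [finrank_euclideanSpace_fin])
  have himage : (fun x => kVal U (Yx x) (f x) k) '' X =
      (fun x => worstVal U (Yx x) (f x)) '' X := image_congr hpointwise
  exact ⟨hpointwise, by rw [himage], fun x hx => by rw [hpointwise x hx, himage]⟩

/-- Under objective uncertainty with a convex compact uncertainty set and a
continuous objective, concave in `ξ`, for `k ≥ n_ξ + 1` the `k`-adaptability problem and the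
two-stage robust problem coincide: pointwise in `x`, in optimal value, and in optimal
first-stage solutions. -/
theorem stmt_1 (nx ny nξ : ℕ) (hnx : 0 < nx) (hny : 0 < ny) (hnξ : 0 < nξ)
    (X : Set (EuclideanSpace ℝ (Fin nx))) (hXcomp : IsCompact X) (hXne : X.Nonempty)
    (Y : Set (EuclideanSpace ℝ (Fin ny))) (hYfin : Y.Finite) (hYne : Y.Nonempty)
    (hYint : ∀ y ∈ Y, ∀ i, ∃ z : ℤ, y i = (z : ℝ))
    (Yx : EuclideanSpace ℝ (Fin nx) → Set (EuclideanSpace ℝ (Fin ny)))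
    (hYxsub : ∀ x ∈ X, Yx x ⊆ Y) (hYxne : ∀ x ∈ X, (Yx x).Nonempty)
    (U : Set (EuclideanSpace ℝ (Fin nξ))) (hUcomp : IsCompact U) (hUconv : Convex ℝ U)
    (hUne : U.Nonempty)
    (f : EuclideanSpace ℝ (Fin nx) → EuclideanSpace ℝ (Fin ny) →
      EuclideanSpace ℝ (Fin nξ) → ℝ)
    (hfcont : Continuous fun p : EuclideanSpace ℝ (Fin nx) × EuclideanSpace ℝ (Fin ny) ×
      EuclideanSpace ℝ (Fin nξ) => f p.1 p.2.1 p.2.2)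
    (hconc : ∀ x ∈ X, ∀ y ∈ Y, ConcaveOn ℝ U (f x y))
    (k : ℕ) (hk : nξ + 1 ≤ k) :
    (∀ x ∈ X, kVal U (Yx x) (f x) k = worstVal U (Yx x) (f x)) ∧
    sInf ((fun x => kVal U (Yx x) (f x) k) '' X) =
      sInf ((fun x => worstVal U (Yx x) (f x)) '' X) ∧
    (∀ x ∈ X,
      kVal U (Yx x) (f x) k = sInf ((fun x' => kVal U (Yx x') (f x') k) '' X) ↔
      worstVal U (Yx x) (f x) = sInf ((fun x' => worstVal U (Yx x') (f x')) '' X)) :=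
  stmt_1_general nx ny nξ X Y hYfin Yx hYxsub hYxne U hUcomp hUne f hfcont hconc k hk
end

section
/- For every x ∈ X there exists a subset S ⊆ Y(x) with |S| ≤ n_ξ + 1 such that sup_{ξ∈U} min_{y∈S} f(x,y,ξ) = sup_{ξ∈U} min_{y∈Y(x)} f(x,y,ξ); that is, at most n_ξ + 1 of the second-stage solutions suffice to attain the worst-case value for x. -/
noncomputable def minVal {Eξ Ey : Type*} (S : Set Ey) (F : Ey → Eξ → ℝ) (ξ : Eξ) : ℝ :=
  sInf ((fun y => F y ξ) '' S)

open Module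

section

variable {E ι : Type*} {S T : Set ι} {F : ι → E → ℝ} {U : Set E}

lemma minVal_le (hS : S.Finite) {y : ι} (hy : y ∈ S) (ξ : E) : minVal S F ξ ≤ F y ξ :=
  csInf_le (hS.image _).bddBelow ⟨y, hy, rfl⟩

lemma exists_eq_minVal (hS : S.Finite) (hSne : S.Nonempty) (ξ : E) :
    ∃ y ∈ S, F y ξ = minVal S F ξ :=
  (hSne.image _).csInf_mem (hS.image _)

lemma minVal_anti (hST : S ⊆ T) (hSne : S.Nonempty) (hT : T.Finite) (ξ : E) :
    minVal T F ξ ≤ minVal S F ξ := by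
  obtain ⟨y, hy, hyS⟩ := exists_eq_minVal (hT.subset hST) hSne ξ
  exact hyS ▸ minVal_le hT (hST hy) ξ

lemma continuousOn_minVal [TopologicalSpace E] (hS : S.Finite) (hSne : S.Nonempty)
    (hF : ∀ y ∈ S, ContinuousOn (F y) U) : ContinuousOn (minVal S F) U := by
  lift S to Finset ι using hS
  rw [Finset.coe_nonempty] at hSne
  have hminVal : minVal (S : Set ι) F = fun ξ => S.inf' hSne (F · ξ) := by
    funext ξ
    rw [Finset.inf'_eq_csInf_image]
    rfl
  exact hminVal ▸ ContinuousOn.finset_inf'_apply hSne hF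

lemma worstVal_eq_minVal_of_isMaxOn {ξ₀ : E} (hξ₀ : ξ₀ ∈ U) (hmax : IsMaxOn (minVal S F) U ξ₀) :
    worstVal U S F = minVal S F ξ₀ :=
  IsGreatest.csSup_eq ⟨Set.mem_image_of_mem _ hξ₀, Set.forall_mem_image.2 hmax⟩

lemma worstVal_eq_of_forall_exists_le {v : ℝ} {ξ₀ : E} (hS : S.Finite) (hξ₀ : ξ₀ ∈ U)
    (hle : ∀ ξ ∈ U, ∃ y ∈ S, F y ξ ≤ v) (hge : v ≤ minVal S F ξ₀) : worstVal U S F = v := by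
  have hbound : ∀ ξ ∈ U, minVal S F ξ ≤ v := fun ξ hξ ↦
    let ⟨_, hy, hyv⟩ := hle ξ hξ
    (minVal_le hS hy ξ).trans hyv
  refine le_antisymm (csSup_le ⟨_, ξ₀, hξ₀, rfl⟩ (Set.forall_mem_image.2 hbound)) ?_
  exact hge.trans (le_csSup ⟨v, Set.forall_mem_image.2 hbound⟩ ⟨ξ₀, hξ₀, rfl⟩)

theorem ConcaveOn.exists_finset_card_le_forall_exists_le [AddCommGroup E] [Module ℝ E]
    [FiniteDimensional ℝ E] {T : Finset ι} {v : ℝ} (hF : ∀ y ∈ T, ConcaveOn ℝ U (F y))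
    (hv : ∀ ξ ∈ U, ∃ y ∈ T, F y ξ ≤ v) :
    ∃ I ⊆ T, I.card ≤ finrank ℝ E + 1 ∧ ∀ ξ ∈ U, ∃ y ∈ I, F y ξ ≤ v := by
  by_contra! h
  obtain ⟨ξ₀, hξ₀, -⟩ := h ∅ (Finset.empty_subset T) (by simp)
  obtain ⟨y₀, hy₀, -⟩ := hv ξ₀ hξ₀
  let A : ι → Set E := fun y ↦ {ξ ∈ U | v < F y ξ}
  have hA : (⋂ y ∈ T, A y).Nonempty := by
    refine Convex.helly_theorem' (fun y hy ↦ (hF y hy).convex_gt v) fun I hIT hI ↦ ?_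
    obtain ⟨ξ, hξ, hξI⟩ := h I hIT hI
    exact ⟨ξ, Set.mem_iInter₂.2 fun y hy ↦ ⟨hξ, hξI y hy⟩⟩
  obtain ⟨ξ, hξ⟩ := hA
  have hξA : ∀ y ∈ T, ξ ∈ A y := Set.mem_iInter₂.1 hξ
  obtain ⟨y, hy, hyv⟩ := hv ξ (hξA y₀ hy₀).1
  exact (hξA y hy).2.not_ge hyv

theorem exists_subset_ncard_le_worstVal_eq [TopologicalSpace E] [AddCommGroup E] [Module ℝ E]
    [FiniteDimensional ℝ E] (hU : IsCompact U) (hUne : U.Nonempty) (hT : T.Finite)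
    (hTne : T.Nonempty) (hcont : ∀ y ∈ T, ContinuousOn (F y) U)
    (hconc : ∀ y ∈ T, ConcaveOn ℝ U (F y)) :
    ∃ S ⊆ T, S.Nonempty ∧ S.Finite ∧ S.ncard ≤ finrank ℝ E + 1 ∧
      worstVal U S F = worstVal U T F := by
  obtain ⟨ξ₀, hξ₀, hmax⟩ := hU.exists_isMaxOn hUne (continuousOn_minVal hT hTne hcont)
  rw [worstVal_eq_minVal_of_isMaxOn hξ₀ hmax]
  have hminT : ∀ ξ ∈ U, ∃ y ∈ T, F y ξ ≤ minVal T F ξ₀ := fun ξ hξ ↦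
    let ⟨y, hy, hyξ⟩ := exists_eq_minVal (F := F) hT hTne ξ
    ⟨y, hy, hyξ.symm ▸ hmax hξ⟩
  lift T to Finset ι using hT
  obtain ⟨I, hIT, hIcard, hI⟩ := ConcaveOn.exists_finset_card_le_forall_exists_le hconc hminT
  have hIT' : (I : Set ι) ⊆ T := Finset.coe_subset.2 hIT
  have hIne : (I : Set ι).Nonempty := let ⟨y, hy, _⟩ := hI ξ₀ hξ₀; ⟨y, hy⟩
  refine ⟨I, hIT', hIne, I.finite_toSet, by rwa [Set.ncard_coe_finset], ?_⟩
  exact worstVal_eq_of_forall_exists_le I.finite_toSet hξ₀ hI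
    (minVal_anti hIT' hIne T.finite_toSet ξ₀)

end

theorem stmt_2_general (nx ny nξ : ℕ)
    (X : Set (EuclideanSpace ℝ (Fin nx)))
    (Y : Set (EuclideanSpace ℝ (Fin ny))) (hYfin : Y.Finite)
    (Yx : EuclideanSpace ℝ (Fin nx) → Set (EuclideanSpace ℝ (Fin ny)))
    (hYxsub : ∀ x ∈ X, Yx x ⊆ Y) (hYxne : ∀ x ∈ X, (Yx x).Nonempty)
    (U : Set (EuclideanSpace ℝ (Fin nξ))) (hUcomp : IsCompact U)
    (hUne : U.Nonempty)
    (f : EuclideanSpace ℝ (Fin nx) → EuclideanSpace ℝ (Fin ny) →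
      EuclideanSpace ℝ (Fin nξ) → ℝ)
    (hfcont : Continuous fun p : EuclideanSpace ℝ (Fin nx) × EuclideanSpace ℝ (Fin ny) ×
      EuclideanSpace ℝ (Fin nξ) => f p.1 p.2.1 p.2.2)
    (hconc : ∀ x ∈ X, ∀ y ∈ Y, ConcaveOn ℝ U (f x y)) :
    ∀ x ∈ X, ∃ S : Set (EuclideanSpace ℝ (Fin ny)), S ⊆ Yx x ∧ S.Nonempty ∧ S.Finite ∧
      S.ncard ≤ nξ + 1 ∧ worstVal U S (f x) = worstVal U (Yx x) (f x) := by
  intro x hx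
  have hcont : ∀ y, Continuous (f x y) := fun y ↦
    hfcont.comp (continuous_const.prodMk (continuous_const.prodMk continuous_id))
  simpa only [finrank_euclideanSpace_fin] using
    exists_subset_ncard_le_worstVal_eq hUcomp hUne (hYfin.subset (hYxsub x hx)) (hYxne x hx)
      (fun y _ ↦ (hcont y).continuousOn) fun y hy ↦ hconc x hx y (hYxsub x hx hy)

/-- For every first-stage decision `x ∈ X` there is a subset `S ⊆ Y(x)` of at
most `n_ξ + 1` second-stage solutions whose worst-case value equals that of the full set `Y(x)`. -/
theorem stmt_2 (nx ny nξ : ℕ) (hnx : 0 < nx) (hny : 0 < ny) (hnξ : 0 < nξ)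
    (X : Set (EuclideanSpace ℝ (Fin nx))) (hXcomp : IsCompact X) (hXne : X.Nonempty)
    (Y : Set (EuclideanSpace ℝ (Fin ny))) (hYfin : Y.Finite) (hYne : Y.Nonempty)
    (hYint : ∀ y ∈ Y, ∀ i, ∃ z : ℤ, y i = (z : ℝ))
    (Yx : EuclideanSpace ℝ (Fin nx) → Set (EuclideanSpace ℝ (Fin ny)))
    (hYxsub : ∀ x ∈ X, Yx x ⊆ Y) (hYxne : ∀ x ∈ X, (Yx x).Nonempty)
    (U : Set (EuclideanSpace ℝ (Fin nξ))) (hUcomp : IsCompact U) (hUconv : Convex ℝ U)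
    (hUne : U.Nonempty)
    (f : EuclideanSpace ℝ (Fin nx) → EuclideanSpace ℝ (Fin ny) →
      EuclideanSpace ℝ (Fin nξ) → ℝ)
    (hfcont : Continuous fun p : EuclideanSpace ℝ (Fin nx) × EuclideanSpace ℝ (Fin ny) ×
      EuclideanSpace ℝ (Fin nξ) => f p.1 p.2.1 p.2.2)
    (hconc : ∀ x ∈ X, ∀ y ∈ Y, ConcaveOn ℝ U (f x y)) :
    ∀ x ∈ X, ∃ S : Set (EuclideanSpace ℝ (Fin ny)), S ⊆ Yx x ∧ S.Nonempty ∧ S.Finite ∧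
      S.ncard ≤ nξ + 1 ∧ worstVal U S (f x) = worstVal U (Yx x) (f x) :=
  stmt_2_general nx ny nξ X Y hYfin Yx hYxsub hYxne U hUcomp hUne f hfcont hconc
end

section
/- Assume additionally that f is L-Lipschitz in y, i.e., there is L > 0 with |f(x,y,ξ) − f(x,y′,ξ)| ≤ L·‖y − y′‖ for all x ∈ X, ξ ∈ U, y, y′ ∈ Y (Euclidean norm). Then for all integers s, k with 1 ≤ s ≤ k it holds that opt(s) − opt(k) ≤ L · diam(Y) · ln(k/s), where diam(Y) = max_{y,y′∈Y} ‖y − y′‖. -/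
/-!
Fix `x` and a `(k+1)`-tuple of policies `yⁱ` with worst case `w`, so that every `ξ ∈ U`
has some `i` with `f(x, yⁱ, ξ) ≤ w`. Since each `f(x, yⁱ, ·)` is concave, separating the
convex set `{v | ∃ ξ ∈ U, v ≤ (f(x, yⁱ, ξ))ᵢ}` from the orthant `{v | ∀ i, w < vᵢ}` yields
weights `μ` in the standard simplex with `∑ μᵢ f(x, yⁱ, ξ) ≤ w` on `U`. Dropping the policy `m`
of least weight `μₘ ≤ 1/(k+1)` raises the worst case by at most `μₘ D`, where `D = L · diam Y`
bounds `f(x, y, ξ) - f(x, y', ξ)`. Hence `opt(k) ≤ opt(k+1) + D/(k+1)`, and summing from `s`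
to `k` with `1/(j+1) ≤ log((j+1)/j)` gives the claim.
-/

open Set

section Separation

variable {ι : Type*} [Fintype ι]

lemma nonpos_of_forall_sum_mul_lt {w : ι → ℝ} {t u : ℝ}
    (h : ∀ v : ι → ℝ, (∀ i, t < v i) → ∑ i, w i * v i < u) (i : ι) : w i ≤ 0 := by
  classical
  by_contra! hw
  set a := ∑ j, w j * (t + 1)
  have hc : 0 ≤ (u - a) / w i :=
    div_nonneg (sub_nonneg.2 (h _ fun _ => lt_add_one t).le) hw.le
  have hv := h (fun j => t + 1 + if j = i then (u - a) / w i else 0) fun j => by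
    split_ifs <;> linarith
  simp only [a, mul_add, Finset.sum_add_distrib, mul_ite, mul_zero, Finset.sum_ite_eq',
    Finset.mem_univ, if_true, mul_div_cancel₀ _ hw.ne'] at hv
  linarith

lemma exists_mem_stdSimplex_sum_mul_le {C : Set (ι → ℝ)} (hconv : Convex ℝ C)
    (hne : C.Nonempty) {t : ℝ} (hC : ∀ v ∈ C, ∃ i, v i ≤ t) :
    ∃ μ ∈ stdSimplex ℝ ι, ∀ v ∈ C, ∑ i, μ i * v i ≤ t := by
  classical
  have hdisj : Disjoint (univ.pi fun _ : ι => Ioi t) C := disjoint_left.2 fun v hvO hvC => by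
    obtain ⟨i, hi⟩ := hC v hvC
    exact hi.not_gt (hvO i (mem_univ i))
  obtain ⟨φ, u, hφO, hφC⟩ := geometric_hahn_banach_open (convex_pi fun _ _ => convex_Ioi t)
    (isOpen_set_pi finite_univ fun _ _ => isOpen_Ioi) hconv hdisj
  set w : ι → ℝ := fun i => φ fun j => if i = j then 1 else 0
  have hφ : ∀ v, φ v = ∑ i, w i * v i := fun v => by
    simpa [mul_comm] using φ.toLinearMap.pi_apply_eq_sum_univ v
  have hO : ∀ v : ι → ℝ, (∀ i, t < v i) → ∑ i, w i * v i < u := fun v hv =>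
    hφ v ▸ hφO v fun i _ => hv i
  have hu : ∀ v ∈ C, u ≤ ∑ i, w i * v i := fun v hv => hφ v ▸ hφC v hv
  have hw : ∀ i, w i ≤ 0 := nonpos_of_forall_sum_mul_lt hO
  have hS : ∑ i, w i < 0 := by
    refine (Finset.sum_nonpos fun i _ => hw i).lt_of_ne fun hS => ?_
    have hw0 : ∀ i, w i = 0 := fun i =>
      (Finset.sum_eq_zero_iff_of_nonpos fun i _ => hw i).1 hS i (Finset.mem_univ i)
    obtain ⟨v, hv⟩ := hne
    have h1 := hu v hv
    have h2 := hO _ fun _ => lt_add_one t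
    simp only [hw0, zero_mul, Finset.sum_const_zero] at h1 h2
    linarith
  have htS : t * ∑ i, w i ≤ u := by
    refine le_of_forall_pos_lt_add fun δ hδ => ?_
    have hε : 0 < δ / -∑ i, w i := div_pos hδ (neg_pos.2 hS)
    have := hO (fun _ => t + δ / -∑ i, w i) fun _ => lt_add_of_pos_right t hε
    have hexp : (∑ i, w i) * (t + δ / -∑ i, w i) = t * ∑ i, w i - δ := by
      field_simp [hS.ne]
      ring
    rw [← Finset.sum_mul, hexp] at this
    linarith
  refine ⟨fun i => w i / ∑ j, w j,
    ⟨fun i => div_nonneg_of_nonpos (hw i) hS.le, by rw [← Finset.sum_div, div_self hS.ne]⟩,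
    fun v hv => ?_⟩
  calc ∑ i, w i / (∑ j, w j) * v i = (∑ i, w i * v i) / ∑ j, w j := by
        rw [Finset.sum_div]; congr 1; ext i; ring
    _ ≤ u / ∑ j, w j := div_le_div_of_nonpos_of_le hS.le (hu v hv)
    _ ≤ t := (div_le_iff_of_neg hS).2 htS

variable {E : Type*} [AddCommGroup E] [Module ℝ E] {U : Set E} {g : ι → E → ℝ} {t : ℝ}

lemma exists_mem_stdSimplex_sum_mul_le_of_concaveOn (hU : Convex ℝ U) (hUne : U.Nonempty)
    (hg : ∀ i, ConcaveOn ℝ U (g i)) (ht : ∀ ξ ∈ U, ∃ i, g i ξ ≤ t) :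
    ∃ μ ∈ stdSimplex ℝ ι, ∀ ξ ∈ U, ∑ i, μ i * g i ξ ≤ t := by
  have hconv : Convex ℝ {v : ι → ℝ | ∃ ξ ∈ U, v ≤ fun i => g i ξ} := by
    rintro v ⟨ξ, hξ, hv⟩ v' ⟨ξ', hξ', hv'⟩ a b ha hb hab
    refine ⟨a • ξ + b • ξ', hU hξ hξ' ha hb hab, fun i => ?_⟩
    calc a * v i + b * v' i ≤ a * g i ξ + b * g i ξ' := by gcongr; exacts [hv i, hv' i]
      _ ≤ g i (a • ξ + b • ξ') := (hg i).2 hξ hξ' ha hb hab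
  obtain ⟨ξ₀, hξ₀⟩ := hUne
  obtain ⟨μ, hμ, hle⟩ := exists_mem_stdSimplex_sum_mul_le hconv ⟨_, ξ₀, hξ₀, le_rfl⟩
    fun v ⟨ξ, hξ, hv⟩ => (ht ξ hξ).imp fun i hi => (hv i).trans hi
  exact ⟨μ, hμ, fun ξ hξ => hle _ ⟨ξ, hξ, le_rfl⟩⟩

lemma exists_forall_exists_ne_le_add_div [Nontrivial ι] (hU : Convex ℝ U)
    (hUne : U.Nonempty) (hg : ∀ i, ConcaveOn ℝ U (g i)) {D : ℝ}
    (hD : ∀ i j, ∀ ξ ∈ U, g i ξ - g j ξ ≤ D) (ht : ∀ ξ ∈ U, ∃ i, g i ξ ≤ t) :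
    ∃ m, ∀ ξ ∈ U, ∃ i ≠ m, g i ξ ≤ t + D / Fintype.card ι := by
  classical
  obtain ⟨μ, ⟨hμ0, hμ1⟩, hμ⟩ := exists_mem_stdSimplex_sum_mul_le_of_concaveOn hU hUne hg ht
  obtain ⟨m, -, hm⟩ : ∃ m ∈ Finset.univ, μ m ≤ 1 / Fintype.card ι :=
    Finset.exists_le_of_sum_le Finset.univ_nonempty (by simp [hμ1])
  have hD0 : 0 ≤ D := by
    obtain ⟨ξ, hξ⟩ := hUne
    simpa using hD m m ξ hξ
  refine ⟨m, fun ξ hξ => ?_⟩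
  obtain ⟨i, hi, hmin⟩ := (Finset.univ.erase m).exists_min_image (fun i => g i ξ)
    (by obtain ⟨j, hj⟩ := exists_ne m; exact ⟨j, Finset.mem_erase.2 ⟨hj, Finset.mem_univ j⟩⟩)
  have hlow : ∀ j, g i ξ - (if j = m then D else 0) ≤ g j ξ := fun j => by
    split_ifs with hj
    · subst hj; linarith [hD i j ξ hξ]
    · simpa using hmin j (Finset.mem_erase.2 ⟨hj, Finset.mem_univ j⟩)
  have hsum : g i ξ - μ m * D ≤ ∑ j, μ j * g j ξ :=
    calc g i ξ - μ m * D = ∑ j, μ j * (g i ξ - if j = m then D else 0) := by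
          simp only [mul_sub, Finset.sum_sub_distrib, mul_ite, mul_zero, Finset.sum_ite_eq',
            Finset.mem_univ, if_true, ← Finset.sum_mul, hμ1, one_mul]
      _ ≤ ∑ j, μ j * g j ξ :=
          Finset.sum_le_sum fun j _ => mul_le_mul_of_nonneg_left (hlow j) (hμ0 j)
  refine ⟨i, Finset.ne_of_mem_erase hi, ?_⟩
  have : μ m * D ≤ D / Fintype.card ι := by
    simpa [div_eq_mul_inv, mul_comm] using mul_le_mul_of_nonneg_right hm hD0
  linarith [hμ ξ hξ]

end Separation

lemma le_csInf_add {A : Set ℝ} (hA : A.Nonempty) {a c : ℝ} (h : ∀ b ∈ A, a ≤ b + c) :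
    a ≤ sInf A + c :=
  sub_le_iff_le_add.1 <| le_csInf hA fun b hb => sub_le_iff_le_add.2 (h b hb)

section WorstCase

variable {E Y : Type*} {U : Set E} {S : Set Y} {F : Y → E → ℝ} {t C : ℝ}

lemma worstVal_le_of_forall_exists_le (hU : U.Nonempty) (hS : S.Finite)
    (h : ∀ ξ ∈ U, ∃ y ∈ S, F y ξ ≤ t) : worstVal U S F ≤ t := by
  refine csSup_le (hU.image _) ?_
  rintro _ ⟨ξ, hξ, rfl⟩
  obtain ⟨y, hy, hle⟩ := h ξ hξ
  exact (csInf_le (hS.image _).bddBelow ⟨y, hy, rfl⟩).trans hle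

lemma exists_le_worstVal (hS : S.Finite) (hSne : S.Nonempty)
    (hC : ∀ y ∈ S, ∀ ξ ∈ U, F y ξ ≤ C) :
    ∀ ξ ∈ U, ∃ y ∈ S, F y ξ ≤ worstVal U S F := by
  intro ξ hξ
  obtain ⟨y, hy, hmin⟩ := (hSne.image _).csInf_mem (hS.image fun y => F y ξ)
  obtain ⟨y₀, hy₀⟩ := hSne
  have hbdd : BddAbove ((fun ξ => sInf ((fun y => F y ξ) '' S)) '' U) := by
    refine ⟨C, ?_⟩
    rintro _ ⟨ξ', hξ', rfl⟩
    exact (csInf_le (hS.image _).bddBelow ⟨y₀, hy₀, rfl⟩).trans (hC y₀ hy₀ ξ' hξ')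
  exact ⟨y, hy, hmin.trans_le (le_csSup hbdd ⟨ξ, hξ, rfl⟩)⟩

lemma neg_le_worstVal (hU : U.Nonempty) (hSne : S.Nonempty)
    (hC : ∀ y ∈ S, ∀ ξ ∈ U, |F y ξ| ≤ C) : -C ≤ worstVal U S F := by
  obtain ⟨y₀, hy₀⟩ := hSne
  have hinner : ∀ ξ ∈ U, sInf ((fun y => F y ξ) '' S) ∈ Icc (-C) C := fun ξ hξ => by
    have hlow : -C ∈ lowerBounds ((fun y => F y ξ) '' S) := by
      rintro _ ⟨y, hy, rfl⟩
      exact (abs_le.1 (hC y hy ξ hξ)).1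
    exact ⟨le_csInf ⟨_, y₀, hy₀, rfl⟩ hlow,
      (csInf_le ⟨-C, hlow⟩ ⟨y₀, hy₀, rfl⟩).trans (abs_le.1 (hC y₀ hy₀ ξ hξ)).2⟩
  obtain ⟨ξ₀, hξ₀⟩ := hU
  refine (hinner ξ₀ hξ₀).1.trans (le_csSup ⟨C, ?_⟩ ⟨ξ₀, hξ₀, rfl⟩)
  rintro _ ⟨ξ, hξ, rfl⟩
  exact (hinner ξ hξ).2

variable {k : ℕ}

lemma kVal_le_worstVal [NeZero k] (hU : U.Nonempty) (hC : ∀ y ∈ S, ∀ ξ ∈ U, |F y ξ| ≤ C)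
    {y : Fin k → Y} (hy : ∀ i, y i ∈ S) : kVal U S F k ≤ worstVal U (range y) F := by
  refine csInf_le ⟨-C, ?_⟩ ⟨y, hy, rfl⟩
  rintro _ ⟨y', hy', rfl⟩
  exact neg_le_worstVal hU (range_nonempty y') (by rintro _ ⟨i, rfl⟩; exact hC _ (hy' i))

lemma neg_le_kVal [NeZero k] (hU : U.Nonempty) (hS : S.Nonempty)
    (hC : ∀ y ∈ S, ∀ ξ ∈ U, |F y ξ| ≤ C) : -C ≤ kVal U S F k := by
  obtain ⟨y₀, hy₀⟩ := hS
  refine le_csInf ⟨_, fun _ => y₀, fun _ => hy₀, rfl⟩ ?_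
  rintro _ ⟨y, hy, rfl⟩
  exact neg_le_worstVal hU (range_nonempty y) (by rintro _ ⟨i, rfl⟩; exact hC _ (hy i))

lemma le_kVal_add (hS : S.Nonempty) {a c : ℝ}
    (h : ∀ y : Fin k → Y, (∀ i, y i ∈ S) → a ≤ worstVal U (range y) F + c) :
    a ≤ kVal U S F k + c := by
  obtain ⟨y₀, hy₀⟩ := hS
  refine le_csInf_add ?_ ?_
  · exact ⟨_, fun _ => y₀, fun _ => hy₀, rfl⟩
  · rintro _ ⟨y, hy, rfl⟩
    exact h y hy

lemma kVal_le_kVal_succ_add [AddCommGroup E] [Module ℝ E] (hUconv : Convex ℝ U)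
    (hU : U.Nonempty) (hSne : S.Nonempty)
    (hconc : ∀ y ∈ S, ConcaveOn ℝ U (F y)) (hC : ∀ y ∈ S, ∀ ξ ∈ U, |F y ξ| ≤ C) {D : ℝ}
    (hD : ∀ y ∈ S, ∀ y' ∈ S, ∀ ξ ∈ U, F y ξ - F y' ξ ≤ D) (hk : k ≠ 0) :
    kVal U S F k ≤ kVal U S F (k + 1) + D / (k + 1) := by
  have : NeZero k := ⟨hk⟩
  have : Nontrivial (Fin (k + 1)) := Fin.nontrivial_iff_two_le.2 (by omega)
  refine le_kVal_add hSne fun y hy => ?_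
  have hworst := exists_le_worstVal (finite_range y) (range_nonempty y) (C := C) (U := U)
    (by rintro _ ⟨i, rfl⟩ ξ hξ; exact (abs_le.1 (hC _ (hy i) ξ hξ)).2)
  obtain ⟨m, hm⟩ := exists_forall_exists_ne_le_add_div hUconv hU
    (fun i => hconc _ (hy i)) (fun i i' ξ hξ => hD _ (hy i) _ (hy i') ξ hξ)
    fun ξ hξ => by obtain ⟨_, ⟨i, rfl⟩, hi⟩ := hworst ξ hξ; exact ⟨i, hi⟩
  calc kVal U S F k ≤ worstVal U (range (y ∘ m.succAbove)) F :=
        kVal_le_worstVal hU hC fun i => hy _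
    _ ≤ worstVal U (range y) F + D / (k + 1) := by
        refine worstVal_le_of_forall_exists_le hU (finite_range _) fun ξ hξ => ?_
        obtain ⟨i, hi, hle⟩ := hm ξ hξ
        obtain ⟨i', rfl⟩ := Fin.exists_succAbove_eq hi
        exact ⟨_, ⟨i', rfl⟩, by simpa using hle⟩

end WorstCase

lemma sub_le_mul_log_div_of_le_add_div {a : ℕ → ℝ} {D : ℝ} (hD : 0 ≤ D)
    (h : ∀ j ≠ 0, a j ≤ a (j + 1) + D / (j + 1)) {s k : ℕ} (hs : s ≠ 0) (hsk : s ≤ k) :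
    a s - a k ≤ D * Real.log (k / s) := by
  induction k, hsk using Nat.le_induction with
  | base => simp [div_self (Nat.cast_ne_zero.2 hs : (s : ℝ) ≠ 0)]
  | succ k hsk ih =>
    have hk : (k : ℝ) ≠ 0 := Nat.cast_ne_zero.2 (by omega)
    have hlog : 1 / ((k : ℝ) + 1) ≤ Real.log ((k + 1) / k) := by
      have := Real.one_sub_inv_le_log_of_pos (x := ((k : ℝ) + 1) / k) (by positivity)
      rwa [inv_div, show 1 - (k : ℝ) / (k + 1) = 1 / (k + 1) by field_simp; ring] at this
    have hsplit : Real.log ((k + 1) / s) = Real.log ((k + 1) / k) + Real.log (k / s) := by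
      rw [← Real.log_mul (by positivity) (by positivity)]
      congr 1
      field_simp
    calc a s - a (k + 1) ≤ (a s - a k) + D * (1 / (k + 1)) := by
          linarith [h k (by omega), mul_one_div D ((k : ℝ) + 1)]
      _ ≤ D * Real.log (k / s) + D * Real.log ((k + 1) / k) := by gcongr
      _ = D * Real.log ((k + 1 : ℕ) / s) := by push_cast; rw [hsplit]; ring

theorem stmt_3_general (nx ny nξ : ℕ)
    (X : Set (EuclideanSpace ℝ (Fin nx))) (hXcomp : IsCompact X) (hXne : X.Nonempty)
    (Y : Set (EuclideanSpace ℝ (Fin ny))) (hYfin : Y.Finite)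
    (Yx : EuclideanSpace ℝ (Fin nx) → Set (EuclideanSpace ℝ (Fin ny)))
    (hYxsub : ∀ x ∈ X, Yx x ⊆ Y) (hYxne : ∀ x ∈ X, (Yx x).Nonempty)
    (U : Set (EuclideanSpace ℝ (Fin nξ))) (hUcomp : IsCompact U) (hUconv : Convex ℝ U)
    (hUne : U.Nonempty)
    (f : EuclideanSpace ℝ (Fin nx) → EuclideanSpace ℝ (Fin ny) →
      EuclideanSpace ℝ (Fin nξ) → ℝ)
    (hfcont : Continuous fun p : EuclideanSpace ℝ (Fin nx) × EuclideanSpace ℝ (Fin ny) ×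
      EuclideanSpace ℝ (Fin nξ) => f p.1 p.2.1 p.2.2)
    (hconc : ∀ x ∈ X, ∀ y ∈ Y, ConcaveOn ℝ U (f x y))
    (L : ℝ) (hL : 0 < L)
    (hlip : ∀ x ∈ X, ∀ ξ ∈ U, ∀ y ∈ Y, ∀ y' ∈ Y, |f x y ξ - f x y' ξ| ≤ L * ‖y - y'‖) :
    ∀ s k : ℕ, 1 ≤ s → s ≤ k →
      sInf ((fun x => kVal U (Yx x) (f x) s) '' X) -
        sInf ((fun x => kVal U (Yx x) (f x) k) '' X) ≤
      L * Metric.diam Y * Real.log ((k : ℝ) / (s : ℝ)) := by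
  intro s k hs hsk
  have : NeZero s := ⟨by omega⟩
  obtain ⟨C, hC⟩ := (hXcomp.prod (hYfin.isCompact.prod hUcomp)).exists_bound_of_continuousOn
    hfcont.continuousOn
  have hCx : ∀ x ∈ X, ∀ y ∈ Yx x, ∀ ξ ∈ U, |f x y ξ| ≤ C := fun x hx y hy ξ hξ =>
    hC (x, y, ξ) ⟨hx, hYxsub x hx hy, hξ⟩
  have hD : ∀ x ∈ X, ∀ y ∈ Yx x, ∀ y' ∈ Yx x, ∀ ξ ∈ U,
      f x y ξ - f x y' ξ ≤ L * Metric.diam Y := fun x hx y hy y' hy' ξ hξ =>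
    (le_abs_self _).trans <|
      (hlip x hx ξ hξ y (hYxsub x hx hy) y' (hYxsub x hx hy')).trans <|
      mul_le_mul_of_nonneg_left (dist_eq_norm y y' ▸ Metric.dist_le_diam_of_mem
        hYfin.isBounded (hYxsub x hx hy) (hYxsub x hx hy')) hL.le
  have hchain : ∀ x ∈ X, kVal U (Yx x) (f x) s - kVal U (Yx x) (f x) k ≤
      L * Metric.diam Y * Real.log (k / s) := fun x hx =>
    sub_le_mul_log_div_of_le_add_div (mul_nonneg hL.le Metric.diam_nonneg)
      (fun j hj => kVal_le_kVal_succ_add hUconv hUne (hYxne x hx)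
        (fun y hy => hconc x hx y (hYxsub x hx hy)) (hCx x hx) (hD x hx) hj)
      (by omega) hsk
  have hbdd : BddBelow ((fun x => kVal U (Yx x) (f x) s) '' X) := by
    refine ⟨-C, ?_⟩
    rintro _ ⟨x, hx, rfl⟩
    exact neg_le_kVal hUne (hYxne x hx) (hCx x hx)
  refine sub_le_iff_le_add'.2 (le_csInf_add (hXne.image _) ?_)
  rintro _ ⟨x, hx, rfl⟩
  linarith [csInf_le hbdd ⟨x, hx, rfl⟩, hchain x hx]

/-- If `f` is additionally `L`-Lipschitz in `y` (Euclidean norm), then for all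
integers `1 ≤ s ≤ k` one has `opt(s) − opt(k) ≤ L · diam(Y) · ln(k/s)`. -/
theorem stmt_3 (nx ny nξ : ℕ) (hnx : 0 < nx) (hny : 0 < ny) (hnξ : 0 < nξ)
    (X : Set (EuclideanSpace ℝ (Fin nx))) (hXcomp : IsCompact X) (hXne : X.Nonempty)
    (Y : Set (EuclideanSpace ℝ (Fin ny))) (hYfin : Y.Finite) (hYne : Y.Nonempty)
    (hYint : ∀ y ∈ Y, ∀ i, ∃ z : ℤ, y i = (z : ℝ))
    (Yx : EuclideanSpace ℝ (Fin nx) → Set (EuclideanSpace ℝ (Fin ny)))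
    (hYxsub : ∀ x ∈ X, Yx x ⊆ Y) (hYxne : ∀ x ∈ X, (Yx x).Nonempty)
    (U : Set (EuclideanSpace ℝ (Fin nξ))) (hUcomp : IsCompact U) (hUconv : Convex ℝ U)
    (hUne : U.Nonempty)
    (f : EuclideanSpace ℝ (Fin nx) → EuclideanSpace ℝ (Fin ny) →
      EuclideanSpace ℝ (Fin nξ) → ℝ)
    (hfcont : Continuous fun p : EuclideanSpace ℝ (Fin nx) × EuclideanSpace ℝ (Fin ny) ×
      EuclideanSpace ℝ (Fin nξ) => f p.1 p.2.1 p.2.2)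
    (hconc : ∀ x ∈ X, ∀ y ∈ Y, ConcaveOn ℝ U (f x y))
    (L : ℝ) (hL : 0 < L)
    (hlip : ∀ x ∈ X, ∀ ξ ∈ U, ∀ y ∈ Y, ∀ y' ∈ Y, |f x y ξ - f x y' ξ| ≤ L * ‖y - y'‖) :
    ∀ s k : ℕ, 1 ≤ s → s ≤ k →
      sInf ((fun x => kVal U (Yx x) (f x) s) '' X) -
        sInf ((fun x => kVal U (Yx x) (f x) k) '' X) ≤
      L * Metric.diam Y * Real.log ((k : ℝ) / (s : ℝ)) :=
  stmt_3_general nx ny nξ X hXcomp hXne Y hYfin Yx hYxsub hYxne U hUcomp hUconv hUne f hfcont hconc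
    L hL hlip
end

section
/- Let R be a positive integer and assume that for every x ∈ X there exist R convex recourse-stable regions D_1,…,D_R ⊆ U with cl(D_1) ∪ … ∪ cl(D_R) = U. Then for every integer k ≥ min{R·(n_ξ+1), |Y|} and every x ∈ X one has inf over k-tuples (y¹,…,y^k) ∈ Y(x)^k of sup_{ξ∈U} min_{i∈[k]} f(x,y^i,ξ) equal to sup_{ξ∈U} min_{y∈Y(x)} f(x,y,ξ) (both possibly +∞). Consequently opt(k) = opt(2RO-C) and a first-stage decision x ∈ X attains the optimal value of the k-adaptability problem if and only if it attains the optimal value of the two-stage robust problem. -/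
/-- Worst-case value `sup_{ξ ∈ U} min_{y ∈ S} F(y, ξ)` with values in `ℝ ∪ {±∞}`. -/
noncomputable def worstValE {Eξ Ey : Type*} (U : Set Eξ) (S : Set Ey)
    (F : Ey → Eξ → EReal) : EReal :=
  ⨆ ξ ∈ U, ⨅ y ∈ S, F y ξ

/-- The `k`-adaptability value for a fixed first stage:
`inf_{y¹,…,y^k ∈ S} sup_{ξ ∈ U} min_{i ∈ [k]} F(yⁱ, ξ)`. -/
noncomputable def kValE {Eξ Ey : Type*} (U : Set Eξ) (S : Set Ey)
    (F : Ey → Eξ → EReal) (k : ℕ) : EReal :=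
  ⨅ y ∈ {y : Fin k → Ey | ∀ i, y i ∈ S}, worstValE U (Set.range y) F

/-- Feasibility of `(x, y)` under scenario `ξ`: `A(ξ)x + B(ξ)y ≥ h(ξ)` componentwise. -/
def Feas {nx ny nξ m : ℕ} (A : (Fin nξ → ℝ) →ᵃ[ℝ] Matrix (Fin m) (Fin nx) ℝ)
    (B : (Fin nξ → ℝ) →ᵃ[ℝ] Matrix (Fin m) (Fin ny) ℝ)
    (hm : (Fin nξ → ℝ) →ᵃ[ℝ] (Fin m → ℝ))
    (x : Fin nx → ℝ) (y : Fin ny → ℝ) (ξ : Fin nξ → ℝ) : Prop :=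
  ∀ l, hm ξ l ≤ (∑ j, A ξ l j * x j) + ∑ j, B ξ l j * y j

open Classical in
/-- `f(x,y,ξ) = g(x,y,ξ)` if `A(ξ)x + B(ξ)y ≥ h(ξ)` and `+∞` otherwise. -/
noncomputable def fE {nx ny nξ m : ℕ}
    (g : (Fin nx → ℝ) → (Fin ny → ℝ) → (Fin nξ → ℝ) → ℝ)
    (A : (Fin nξ → ℝ) →ᵃ[ℝ] Matrix (Fin m) (Fin nx) ℝ)
    (B : (Fin nξ → ℝ) →ᵃ[ℝ] Matrix (Fin m) (Fin ny) ℝ)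
    (hm : (Fin nξ → ℝ) →ᵃ[ℝ] (Fin m → ℝ))
    (x : Fin nx → ℝ) (y : Fin ny → ℝ) (ξ : Fin nξ → ℝ) : EReal :=
  if Feas A B hm x y ξ then ((g x y ξ : ℝ) : EReal) else ⊤

/-- A convex set `D` is recourse-stable for `x` if every `y ∈ Y(x)` is feasible either for all
`ξ ∈ D` or for no `ξ ∈ D`. -/
def RecourseStable {nx ny nξ m : ℕ} (A : (Fin nξ → ℝ) →ᵃ[ℝ] Matrix (Fin m) (Fin nx) ℝ)
    (B : (Fin nξ → ℝ) →ᵃ[ℝ] Matrix (Fin m) (Fin ny) ℝ)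
    (hm : (Fin nξ → ℝ) →ᵃ[ℝ] (Fin m → ℝ))
    (Yx : (Fin nx → ℝ) → Set (Fin ny → ℝ))
    (x : Fin nx → ℝ) (D : Set (Fin nξ → ℝ)) : Prop :=
  ∀ y ∈ Yx x, (∀ ξ ∈ D, Feas A B hm x y ξ) ∨ (∀ ξ ∈ D, ¬ Feas A B hm x y ξ)

lemma feasClosed {nx ny nξ m : ℕ} (A : (Fin nξ → ℝ) →ᵃ[ℝ] Matrix (Fin m) (Fin nx) ℝ)
    (B : (Fin nξ → ℝ) →ᵃ[ℝ] Matrix (Fin m) (Fin ny) ℝ)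
    (hm : (Fin nξ → ℝ) →ᵃ[ℝ] (Fin m → ℝ))
    (x : Fin nx → ℝ) (y : Fin ny → ℝ) :
    IsClosed {ξ : Fin nξ → ℝ | Feas A B hm x y ξ} := by
  have hA : ∀ (l : Fin m) (j : Fin nx), Continuous fun ξ : Fin nξ → ℝ => A ξ l j := by
    intro l j
    let e : Matrix (Fin m) (Fin nx) ℝ →ₗ[ℝ] ℝ :=
      { toFun := fun M => M l j
        map_add' := fun M N => rfl
        map_smul' := fun c M => rfl }
    exact (e.toAffineMap.comp A).continuous_of_finiteDimensional
  have hB : ∀ (l : Fin m) (j : Fin ny), Continuous fun ξ : Fin nξ → ℝ => B ξ l j := by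
    intro l j
    let e : Matrix (Fin m) (Fin ny) ℝ →ₗ[ℝ] ℝ :=
      { toFun := fun M => M l j
        map_add' := fun M N => rfl
        map_smul' := fun c M => rfl }
    exact (e.toAffineMap.comp B).continuous_of_finiteDimensional
  have hh : ∀ (l : Fin m), Continuous fun ξ : Fin nξ → ℝ => hm ξ l := by
    intro l
    let e : (Fin m → ℝ) →ₗ[ℝ] ℝ :=
      { toFun := fun v => v l
        map_add' := fun v w => rfl
        map_smul' := fun c v => rfl }
    exact (e.toAffineMap.comp hm).continuous_of_finiteDimensional
  have heq : {ξ : Fin nξ → ℝ | Feas A B hm x y ξ} =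
      ⋂ l, {ξ : Fin nξ → ℝ | hm ξ l ≤ (∑ j, A ξ l j * x j) + ∑ j, B ξ l j * y j} := by
    ext ξ; simp [Feas, Set.mem_iInter]
  rw [heq]
  refine isClosed_iInter fun l => isClosed_le (hh l) ?_
  exact (continuous_finset_sum _ fun j _ => (hA l j).mul continuous_const).add
    (continuous_finset_sum _ fun j _ => (hB l j).mul continuous_const)

lemma exists_cover_tuple {α : Type*} (T : Finset α) (hne : T.Nonempty) (k : ℕ)
    (hcard : T.card ≤ k) :
    ∃ y : Fin k → α, (∀ i, y i ∈ T) ∧ ∀ a ∈ T, ∃ i, y i = a := by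
  obtain ⟨a0, ha0⟩ := hne
  refine ⟨fun i => if h : (i : ℕ) < T.toList.length then T.toList[(i : ℕ)] else a0,
    fun i => ?_, fun b hb => ?_⟩
  · dsimp only
    by_cases h : (i : ℕ) < T.toList.length
    · rw [dif_pos h]; exact Finset.mem_toList.mp (List.getElem_mem h)
    · rw [dif_neg h]; exact ha0
  · have hb' : b ∈ T.toList := Finset.mem_toList.mpr hb
    obtain ⟨n, hn, hbn⟩ := List.mem_iff_getElem.mp hb'
    have hnk : n < k := lt_of_lt_of_le (by simpa [Finset.length_toList] using hn) hcard
    refine ⟨⟨n, hnk⟩, ?_⟩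
    show (if h : n < T.toList.length then T.toList[n] else a0) = b
    rw [dif_pos hn]; exact hbn

/-- If for every `x ∈ X` the uncertainty set is covered by the closures of `R`
convex recourse-stable regions, then for every `k ≥ min{R·(n_ξ+1), |Y|}` the `k`-adaptability
problem with constraint uncertainty coincides with the two-stage robust problem: pointwise in
`x`, in optimal value, and in optimal first-stage solutions. -/
theorem stmt_5 (nx ny nξ m : ℕ) (hnx : 0 < nx) (hny : 0 < ny) (hnξ : 0 < nξ) (hm0 : 0 < m)
    (X : Set (Fin nx → ℝ)) (hXcomp : IsCompact X) (hXne : X.Nonempty)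
    (Y : Set (Fin ny → ℝ)) (hYfin : Y.Finite) (hYne : Y.Nonempty)
    (hYint : ∀ y ∈ Y, ∀ i, ∃ z : ℤ, y i = (z : ℝ))
    (Yx : (Fin nx → ℝ) → Set (Fin ny → ℝ))
    (hYxsub : ∀ x ∈ X, Yx x ⊆ Y) (hYxne : ∀ x ∈ X, (Yx x).Nonempty)
    (U : Set (Fin nξ → ℝ)) (hUcomp : IsCompact U) (hUconv : Convex ℝ U) (hUne : U.Nonempty)
    (g : (Fin nx → ℝ) → (Fin ny → ℝ) → (Fin nξ → ℝ) → ℝ)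
    (hgcont : Continuous fun p : (Fin nx → ℝ) × (Fin ny → ℝ) × (Fin nξ → ℝ) =>
      g p.1 p.2.1 p.2.2)
    (hgconc : ∀ x ∈ X, ∀ y ∈ Y, ConcaveOn ℝ U (g x y))
    (A : (Fin nξ → ℝ) →ᵃ[ℝ] Matrix (Fin m) (Fin nx) ℝ)
    (B : (Fin nξ → ℝ) →ᵃ[ℝ] Matrix (Fin m) (Fin ny) ℝ)
    (hm : (Fin nξ → ℝ) →ᵃ[ℝ] (Fin m → ℝ))
    (hfeas : ∃ x ∈ X, ∀ ξ ∈ U, ∃ y ∈ Yx x, Feas A B hm x y ξ)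
    (R : ℕ) (hR : 0 < R)
    (hRS : ∀ x ∈ X, ∃ D : Fin R → Set (Fin nξ → ℝ),
      (∀ t, D t ⊆ U ∧ Convex ℝ (D t) ∧ RecourseStable A B hm Yx x (D t)) ∧
      (⋃ t, closure (D t)) = U)
    (k : ℕ) (hk : min (R * (nξ + 1)) Y.ncard ≤ k) :
    (∀ x ∈ X, kValE U (Yx x) (fE g A B hm x) k = worstValE U (Yx x) (fE g A B hm x)) ∧
    (⨅ x ∈ X, kValE U (Yx x) (fE g A B hm x) k) =
      (⨅ x ∈ X, worstValE U (Yx x) (fE g A B hm x)) ∧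
    (∀ x ∈ X,
      kValE U (Yx x) (fE g A B hm x) k = (⨅ x' ∈ X, kValE U (Yx x') (fE g A B hm x') k) ↔
      worstValE U (Yx x) (fE g A B hm x) =
        (⨅ x' ∈ X, worstValE U (Yx x') (fE g A B hm x'))) := by
  classical
  have hYxfin : ∀ x ∈ X, (Yx x).Finite := fun x hx => hYfin.subset (hYxsub x hx)
  have hk1 : 1 ≤ k := by
    have h1 : 1 ≤ R * (nξ + 1) := Nat.one_le_iff_ne_zero.mpr (by positivity)
    have h2 : 1 ≤ Y.ncard := (Set.ncard_pos hYfin).mpr hYne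
    omega
  have key : ∀ x ∈ X, kValE U (Yx x) (fE g A B hm x) k
      = worstValE U (Yx x) (fE g A B hm x) := by
    intro x hx
    set F : (Fin ny → ℝ) → (Fin nξ → ℝ) → EReal := fE g A B hm x with hF
    have hinfle : ∀ ξ ∈ U, (⨅ y ∈ Yx x, F y ξ) ≤ worstValE U (Yx x) F := by
      intro ξ hξ
      simp only [worstValE]
      exact le_iSup₂ (f := fun ξ (_ : ξ ∈ U) => ⨅ y ∈ Yx x, F y ξ) ξ hξ
    have hge : worstValE U (Yx x) F ≤ kValE U (Yx x) F k := by
      simp only [kValE]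
      refine le_iInf₂ fun y hy => ?_
      simp only [worstValE]
      refine iSup₂_mono fun ξ hξ => ?_
      refine le_iInf₂ fun z hz => ?_
      obtain ⟨i, rfl⟩ := hz
      exact iInf₂_le (y i) (hy i)
    refine le_antisymm ?_ hge
    have main : ∃ T : Finset (Fin ny → ℝ), T.Nonempty ∧ ↑T ⊆ Yx x ∧ T.card ≤ k ∧
        ∀ ξ ∈ U, (⨅ y ∈ (↑T : Set (Fin ny → ℝ)), F y ξ) ≤ worstValE U (Yx x) F := by
      rcases min_le_iff.mp hk with hkR | hkY
      swap
      · -- |Y| ≤ k : take all of Yx x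
        refine ⟨(hYxfin x hx).toFinset, by simpa using hYxne x hx, by simp, ?_, ?_⟩
        · rw [← Set.ncard_eq_toFinset_card _ (hYxfin x hx)]
          exact le_trans (Set.ncard_le_ncard (hYxsub x hx) hYfin) hkY
        · intro ξ hξ
          rw [Set.Finite.coe_toFinset]
          exact hinfle ξ hξ
      · -- R * (nξ + 1) ≤ k
        by_cases hWtop : worstValE U (Yx x) F = ⊤
        · obtain ⟨y0, hy0⟩ := hYxne x hx
          exact ⟨{y0}, ⟨y0, by simp⟩, by simpa using hy0, by simpa using hk1,
            fun ξ _ => by rw [hWtop]; exact le_top⟩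
        have hWbot : worstValE U (Yx x) F ≠ ⊥ := by
          obtain ⟨ξ0, hξ0⟩ := hUne
          obtain ⟨a, haY, hamin⟩ := Set.exists_min_image (Yx x) (fun y => F y ξ0)
            (hYxfin x hx) (hYxne x hx)
          have h1 : F a ξ0 ≤ worstValE U (Yx x) F :=
            le_trans (le_iInf₂ hamin) (hinfle ξ0 hξ0)
          have h2 : F a ξ0 ≠ ⊥ := by
            simp only [hF, fE]; split <;> simp
          intro hcon
          rw [hcon, le_bot_iff] at h1
          exact h2 h1
        set r : ℝ := (worstValE U (Yx x) F).toReal with hr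
        have hWr : worstValE U (Yx x) F = (r : EReal) := (EReal.coe_toReal hWtop hWbot).symm
        obtain ⟨D, hD, hDcov⟩ := hRS x hx
        have hUclosed : IsClosed U := hUcomp.isClosed
        have per : ∀ t : Fin R, ∃ T : Finset (Fin ny → ℝ),
            T.Nonempty ∧ ↑T ⊆ Yx x ∧ T.card ≤ nξ + 1 ∧
            ∀ ξ ∈ closure (D t), (⨅ y ∈ (↑T : Set (Fin ny → ℝ)), F y ξ)
              ≤ worstValE U (Yx x) F := by
          intro t
          obtain ⟨hDsub, hDconv, hDstab⟩ := hD t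
          rcases (D t).eq_empty_or_nonempty with hDe | ⟨ξ0, hξ0⟩
          · obtain ⟨y0, hy0⟩ := hYxne x hx
            exact ⟨{y0}, ⟨y0, by simp⟩, by simpa using hy0, by simp,
              fun ξ hξ => absurd hξ (by simp [hDe])⟩
          set K := closure (D t) with hK
          have hKsubU : K ⊆ U := closure_minimal hDsub hUclosed
          have hKconv : Convex ℝ K := hDconv.closure
          set Sset : Set (Fin ny → ℝ) := {y ∈ Yx x | ∀ ξ ∈ D t, Feas A B hm x y ξ} with hSs
          have hSsub : Sset ⊆ Yx x := fun y hy => hy.1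
          have hSfin : Sset.Finite := (hYxfin x hx).subset hSsub
          have hdich : ∀ y ∈ Yx x, y ∈ Sset ∨ ∀ ξ ∈ D t, ¬ Feas A B hm x y ξ :=
            fun y hy => (hDstab y hy).imp (fun h => ⟨hy, h⟩) id
          have hSne : Sset.Nonempty := by
            have h1 : (⨅ y ∈ Yx x, F y ξ0) ≤ (r : EReal) := hWr ▸ hinfle ξ0 (hDsub hξ0)
            have h2 : (⨅ y ∈ Yx x, F y ξ0) < ⊤ := lt_of_le_of_lt h1 (EReal.coe_lt_top r)
            obtain ⟨y, hy⟩ := iInf_lt_iff.mp h2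
            obtain ⟨hyY, hylt⟩ := iInf_lt_iff.mp hy
            have hfeas0 : Feas A B hm x y ξ0 := by
              by_contra hc
              simp only [hF, fE, if_neg hc] at hylt
              exact absurd hylt (lt_irrefl ⊤)
            rcases hdich y hyY with h | h
            · exact ⟨y, h⟩
            · exact absurd hfeas0 (h ξ0 hξ0)
          have hfeasK : ∀ y ∈ Sset, ∀ ξ ∈ K, Feas A B hm x y ξ := by
            intro y hy ξ hξ
            exact closure_minimal (fun ξ' hξ' => hy.2 ξ' hξ') (feasClosed A B hm x y) hξ
          have hFval : ∀ y ∈ Sset, ∀ ξ ∈ K, F y ξ = ((g x y ξ : ℝ) : EReal) :=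
            fun y hy ξ hξ => by simp only [hF, fE, if_pos (hfeasK y hy ξ hξ)]
          have hD_le : ∀ ξ ∈ D t, ∃ y ∈ Sset, g x y ξ ≤ r := by
            intro ξ hξ
            by_contra hc
            push_neg at hc
            obtain ⟨a, haY, hamin⟩ := Set.exists_min_image (Yx x) (fun y => F y ξ)
              (hYxfin x hx) (hYxne x hx)
            have hinf_eq : (⨅ y ∈ Yx x, F y ξ) = F a ξ :=
              le_antisymm (iInf₂_le a haY) (le_iInf₂ hamin)
            have hinf_le : F a ξ ≤ (r : EReal) := by
              rw [← hinf_eq]; exact hWr ▸ hinfle ξ (hDsub hξ)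
            rcases hdich a haY with h | h
            · rw [hFval a h ξ (subset_closure hξ)] at hinf_le
              exact absurd (EReal.coe_le_coe_iff.mp hinf_le) (not_le.mpr (hc a h))
            · have htop : F a ξ = ⊤ := by simp only [hF, fE, if_neg (h ξ hξ)]
              rw [htop] at hinf_le
              exact absurd hinf_le (not_le.mpr (EReal.coe_lt_top r))
          set SF : Finset (Fin ny → ℝ) := hSfin.toFinset with hSF
          have hmemSF : ∀ y, y ∈ SF ↔ y ∈ Sset := fun y => hSfin.mem_toFinset
          have hSFne : SF.Nonempty := by
            obtain ⟨y0, hy0⟩ := hSne; exact ⟨y0, (hmemSF y0).mpr hy0⟩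
          have hgcont' : ∀ y : Fin ny → ℝ, Continuous fun ξ : Fin nξ → ℝ => g x y ξ :=
            fun y => hgcont.comp (continuous_const.prodMk
              (continuous_const.prodMk continuous_id))
          have hφcont : Continuous fun ξ : Fin nξ → ℝ =>
              SF.inf' hSFne (fun y => g x y ξ) :=
            Continuous.finset_inf'_apply hSFne (fun y _ => hgcont' y)
          have hK_le : ∀ ξ ∈ K, ∃ y ∈ Sset, g x y ξ ≤ r := by
            intro ξ hξ
            have hclosed : IsClosed {ξ' : Fin nξ → ℝ |
                SF.inf' hSFne (fun y => g x y ξ') ≤ r} :=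
              isClosed_le hφcont continuous_const
            have hsub' : D t ⊆ {ξ' : Fin nξ → ℝ |
                SF.inf' hSFne (fun y => g x y ξ') ≤ r} := by
              intro ξ' hξ'
              obtain ⟨y, hyS, hle⟩ := hD_le ξ' hξ'
              show SF.inf' hSFne (fun y => g x y ξ') ≤ r
              exact (Finset.inf'_le_iff hSFne).mpr ⟨y, (hmemSF y).mpr hyS, hle⟩
            have hmem := closure_minimal hsub' hclosed hξ
            have h2 : SF.inf' hSFne (fun y => g x y ξ) ≤ r := hmem
            obtain ⟨y, hySF, hle⟩ := (Finset.inf'_le_iff hSFne).mp h2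
            exact ⟨y, (hmemSF y).mp hySF, hle⟩
          set Bs : (Fin ny → ℝ) → Set (Fin nξ → ℝ) :=
            fun y => {ξ ∈ K | r < g x y ξ} with hBs
          have hBconv : ∀ y ∈ SF, Convex ℝ (Bs y) := fun y hy =>
            ((hgconc x hx y (hYxsub x hx (hSsub ((hmemSF y).mp hy)))).subset
              hKsubU hKconv).convex_gt r
          have hBempty : ¬ (⋂ y ∈ SF, Bs y).Nonempty := by
            rintro ⟨ξ, hξ⟩
            simp only [Set.mem_iInter] at hξ
            obtain ⟨y0, hy0⟩ := hSFne
            have hξK : ξ ∈ K := (hξ y0 hy0).1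
            obtain ⟨y, hyS, hle⟩ := hK_le ξ hξK
            exact absurd (hξ y ((hmemSF y).mpr hyS)).2 (not_lt.mpr hle)
          have hHelly : ∃ I ⊆ SF, I.card ≤ nξ + 1 ∧ ¬ (⋂ y ∈ I, Bs y).Nonempty := by
            by_contra hcon
            push_neg at hcon
            exact hBempty (Convex.helly_theorem' (𝕜 := ℝ) hBconv (fun I hI hIc =>
              hcon I hI (by rwa [Module.finrank_fin_fun] at hIc)))
          obtain ⟨I, hISF, hIcard, hIempty⟩ := hHelly
          have hIne : I.Nonempty := by
            rcases I.eq_empty_or_nonempty with he | hne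
            · exfalso
              apply hIempty
              rw [he]
              simp only [Finset.notMem_empty, Set.iInter_of_empty, Set.iInter_univ]
              exact Set.univ_nonempty
            · exact hne
          refine ⟨I, hIne, ?_, hIcard, ?_⟩
          · intro y hy
            exact hSsub ((hmemSF y).mp (hISF hy))
          · intro ξ hξ
            have hex : ∃ y ∈ I, g x y ξ ≤ r := by
              by_contra hcon
              push_neg at hcon
              exact hIempty ⟨ξ, Set.mem_iInter₂.mpr fun y hy => ⟨hξ, hcon y hy⟩⟩
            obtain ⟨y, hyI, hle⟩ := hex
            have hyS : y ∈ Sset := (hmemSF y).mp (hISF hyI)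
            calc (⨅ y' ∈ (↑I : Set (Fin ny → ℝ)), F y' ξ) ≤ F y ξ :=
                  iInf₂_le y (by simpa using hyI)
              _ = ((g x y ξ : ℝ) : EReal) := hFval y hyS ξ hξ
              _ ≤ (r : EReal) := EReal.coe_le_coe_iff.mpr hle
              _ = worstValE U (Yx x) F := hWr.symm
        choose T hTne hTsub hTcard hTprop using per
        refine ⟨Finset.univ.biUnion T, ?_, ?_, ?_, ?_⟩
        · obtain ⟨y0, hy0⟩ := hTne ⟨0, hR⟩
          exact ⟨y0, Finset.mem_biUnion.mpr ⟨⟨0, hR⟩, Finset.mem_univ _, hy0⟩⟩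
        · intro y hy
          obtain ⟨t, _, hyt⟩ := Finset.mem_biUnion.mp (Finset.mem_coe.mp hy)
          exact hTsub t hyt
        · calc (Finset.univ.biUnion T).card ≤ ∑ t, (T t).card := Finset.card_biUnion_le
            _ ≤ ∑ _t : Fin R, (nξ + 1) := Finset.sum_le_sum fun t _ => hTcard t
            _ = R * (nξ + 1) := by
                rw [Finset.sum_const, Finset.card_univ, Fintype.card_fin, smul_eq_mul]
            _ ≤ k := hkR
        · intro ξ hξ
          rw [← hDcov] at hξ
          obtain ⟨t, hξt⟩ := Set.mem_iUnion.mp hξ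
          refine le_trans (iInf_le_iInf_of_subset ?_) (hTprop t ξ hξt)
          intro y hy
          exact Finset.mem_coe.mpr
            (Finset.mem_biUnion.mpr ⟨t, Finset.mem_univ t, Finset.mem_coe.mp hy⟩)
    obtain ⟨T, hTne, hTsub, hTcard, hTprop⟩ := main
    obtain ⟨ytup, hymem, hysurj⟩ := exists_cover_tuple T hTne k hTcard
    have step1 : kValE U (Yx x) F k ≤ worstValE U (Set.range ytup) F := by
      simp only [kValE]
      exact iInf₂_le ytup (fun i => hTsub (hymem i))
    refine le_trans step1 ?_
    simp only [worstValE]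
    refine iSup₂_le fun ξ hξ => ?_
    have hsub : (↑T : Set (Fin ny → ℝ)) ⊆ Set.range ytup := by
      intro a ha
      obtain ⟨i, hi⟩ := hysurj a (by simpa using ha)
      exact ⟨i, hi⟩
    exact le_trans (iInf_le_iInf_of_subset hsub) (hTprop ξ hξ)
  refine ⟨key, ?_, ?_⟩
  · exact iInf_congr fun x => iInf_congr fun hx => key x hx
  · intro x hx
    rw [key x hx, iInf_congr fun x => iInf_congr fun hx => key x hx]
end

section
/- Consider the constraint-wise uncertainty setting with fixed recourse: the objective does not depend on ξ, and the constraints are a_i(ξ^i)ᵀx + b_iᵀy ≥ h_i(ξ^i) for i ∈ [m], where each constraint has its own uncertain parameter ξ^i ranging over U. Then for every x ∈ X, sup over (ξ¹,…,ξ^m) ∈ U^m of min_{y∈Y(x)} f(x,y,ξ¹,…,ξ^m) equals min_{y∈Y(x)} sup over (ξ¹,…,ξ^m) ∈ U^m of f(x,y,ξ¹,…,ξ^m); consequently the 1-adaptability problem has the same optimal value as the two-stage robust problem, and a solution is optimal for one if and only if it is optimal for the other. -/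
/-- Constraint-wise feasibility: `aᵢ(ξⁱ)ᵀx + bᵢᵀy ≥ hᵢ(ξⁱ)` for all `i ∈ [m]`. -/
def FeasCW {nx ny nξ m : ℕ} (a : Fin m → (Fin nξ → ℝ) → (Fin nx → ℝ))
    (b : Fin m → (Fin ny → ℝ)) (hi : Fin m → (Fin nξ → ℝ) → ℝ)
    (x : Fin nx → ℝ) (y : Fin ny → ℝ) (ξv : Fin m → (Fin nξ → ℝ)) : Prop :=
  ∀ i, hi i (ξv i) ≤ (∑ j, a i (ξv i) j * x j) + ∑ j, b i j * y j

open Classical in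
/-- `f(x,y,ξ¹,…,ξ^m) = ḡ(x,y)` if all constraints hold and `+∞` otherwise. -/
noncomputable def fCW {nx ny nξ m : ℕ} (gbar : (Fin nx → ℝ) → (Fin ny → ℝ) → ℝ)
    (a : Fin m → (Fin nξ → ℝ) → (Fin nx → ℝ))
    (b : Fin m → (Fin ny → ℝ)) (hi : Fin m → (Fin nξ → ℝ) → ℝ)
    (x : Fin nx → ℝ) (y : Fin ny → ℝ) (ξv : Fin m → (Fin nξ → ℝ)) : EReal :=
  if FeasCW a b hi x y ξv then ((gbar x y : ℝ) : EReal) else ⊤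

/-- For constraint-wise uncertainty with fixed recourse and an objective not
depending on `ξ`, the sup-inf and inf-sup over `U^m` coincide for every `x ∈ X`; hence the
`1`-adaptability problem has the two-stage robust optimal value and the same optimal
first-stage solutions. -/
theorem stmt_7 (nx ny nξ m : ℕ) (hnx : 0 < nx) (hny : 0 < ny) (hnξ : 0 < nξ) (hm0 : 0 < m)
    (X : Set (Fin nx → ℝ)) (hXcomp : IsCompact X) (hXne : X.Nonempty)
    (Y : Set (Fin ny → ℝ)) (hYfin : Y.Finite) (hYne : Y.Nonempty)
    (hYint : ∀ y ∈ Y, ∀ i, ∃ z : ℤ, y i = (z : ℝ))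
    (Yx : (Fin nx → ℝ) → Set (Fin ny → ℝ))
    (hYxsub : ∀ x ∈ X, Yx x ⊆ Y) (hYxne : ∀ x ∈ X, (Yx x).Nonempty)
    (U : Set (Fin nξ → ℝ)) (hUcomp : IsCompact U) (hUconv : Convex ℝ U) (hUne : U.Nonempty)
    (gbar : (Fin nx → ℝ) → (Fin ny → ℝ) → ℝ)
    (hgcont : Continuous fun p : (Fin nx → ℝ) × (Fin ny → ℝ) => gbar p.1 p.2)
    (a : Fin m → (Fin nξ → ℝ) → (Fin nx → ℝ)) (ha : ∀ i, Continuous (a i))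
    (hi : Fin m → (Fin nξ → ℝ) → ℝ) (hhi : ∀ i, Continuous (hi i))
    (b : Fin m → (Fin ny → ℝ)) :
    (∀ x ∈ X,
      (⨆ ξv ∈ {ξv : Fin m → (Fin nξ → ℝ) | ∀ i, ξv i ∈ U},
          ⨅ y ∈ Yx x, fCW gbar a b hi x y ξv) =
        (⨅ y ∈ Yx x, ⨆ ξv ∈ {ξv : Fin m → (Fin nξ → ℝ) | ∀ i, ξv i ∈ U},
          fCW gbar a b hi x y ξv)) ∧
    (⨅ x ∈ X, ⨆ ξv ∈ {ξv : Fin m → (Fin nξ → ℝ) | ∀ i, ξv i ∈ U},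
        ⨅ y ∈ Yx x, fCW gbar a b hi x y ξv) =
      (⨅ x ∈ X, ⨅ y ∈ Yx x, ⨆ ξv ∈ {ξv : Fin m → (Fin nξ → ℝ) | ∀ i, ξv i ∈ U},
        fCW gbar a b hi x y ξv) ∧
    (∀ x ∈ X,
      ((⨆ ξv ∈ {ξv : Fin m → (Fin nξ → ℝ) | ∀ i, ξv i ∈ U},
          ⨅ y ∈ Yx x, fCW gbar a b hi x y ξv) =
        (⨅ x' ∈ X, ⨆ ξv ∈ {ξv : Fin m → (Fin nξ → ℝ) | ∀ i, ξv i ∈ U},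
          ⨅ y ∈ Yx x', fCW gbar a b hi x' y ξv)) ↔
      ((⨅ y ∈ Yx x, ⨆ ξv ∈ {ξv : Fin m → (Fin nξ → ℝ) | ∀ i, ξv i ∈ U},
          fCW gbar a b hi x y ξv) =
        (⨅ x' ∈ X, ⨅ y ∈ Yx x', ⨆ ξv ∈ {ξv : Fin m → (Fin nξ → ℝ) | ∀ i, ξv i ∈ U},
          fCW gbar a b hi x' y ξv))) := by
  have key : ∀ x ∈ X,
      (⨆ ξv ∈ {ξv : Fin m → (Fin nξ → ℝ) | ∀ i, ξv i ∈ U},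
          ⨅ y ∈ Yx x, fCW gbar a b hi x y ξv) =
        (⨅ y ∈ Yx x, ⨆ ξv ∈ {ξv : Fin m → (Fin nξ → ℝ) | ∀ i, ξv i ∈ U},
          fCW gbar a b hi x y ξv) := by
    intro x hx
    have hφ : ∀ i : Fin m, ∃ ξ ∈ U, ∀ ζ ∈ U,
        (∑ j, a i ξ j * x j) - hi i ξ ≤ (∑ j, a i ζ j * x j) - hi i ζ := by
      intro i
      have hc : Continuous fun ξ => (∑ j, a i ξ j * x j) - hi i ξ := by
        apply Continuous.sub
        · exact continuous_finset_sum _ fun j _ =>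
            ((continuous_apply j).comp (ha i)).mul continuous_const
        · exact hhi i
      obtain ⟨ξ, hξU, hmin⟩ := hUcomp.exists_isMinOn hUne hc.continuousOn
      exact ⟨ξ, hξU, fun ζ hζ => hmin hζ⟩
    choose ξs hξsU hξsmin using hφ
    have hmem : ξs ∈ {ξv : Fin m → (Fin nξ → ℝ) | ∀ i, ξv i ∈ U} := hξsU
    have hdom : ∀ y (ξv : Fin m → (Fin nξ → ℝ)), (∀ i, ξv i ∈ U) →
        fCW gbar a b hi x y ξv ≤ fCW gbar a b hi x y ξs := by
      intro y ξv hξv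
      unfold fCW
      by_cases hfs : FeasCW a b hi x y ξs
      · have hfv : FeasCW a b hi x y ξv := by
          intro i
          have h1 := hξsmin i (ξv i) (hξv i)
          have h2 := hfs i
          linarith
        simp [hfs, hfv]
      · simp [hfs]
    apply le_antisymm
    · apply iSup₂_le; intro ξv hξv
      apply le_iInf₂; intro y hy
      exact le_trans (iInf₂_le y hy)
        (le_iSup₂ (f := fun ξv (_ : ξv ∈ {ξv : Fin m → (Fin nξ → ℝ) | ∀ i, ξv i ∈ U}) =>
          fCW gbar a b hi x y ξv) ξv hξv)
    · calc (⨅ y ∈ Yx x, ⨆ ξv ∈ {ξv : Fin m → (Fin nξ → ℝ) | ∀ i, ξv i ∈ U},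
            fCW gbar a b hi x y ξv)
          ≤ ⨅ y ∈ Yx x, fCW gbar a b hi x y ξs := by
            apply iInf₂_mono; intro y hy
            exact iSup₂_le fun ξv hξv => hdom y ξv hξv
        _ ≤ ⨆ ξv ∈ {ξv : Fin m → (Fin nξ → ℝ) | ∀ i, ξv i ∈ U},
            ⨅ y ∈ Yx x, fCW gbar a b hi x y ξv :=
            le_iSup₂ (f := fun ξv (_ : ξv ∈ {ξv : Fin m → (Fin nξ → ℝ) | ∀ i, ξv i ∈ U}) =>
              ⨅ y ∈ Yx x, fCW gbar a b hi x y ξv) ξs hmem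
  have h2 : (⨅ x ∈ X, ⨆ ξv ∈ {ξv : Fin m → (Fin nξ → ℝ) | ∀ i, ξv i ∈ U},
        ⨅ y ∈ Yx x, fCW gbar a b hi x y ξv) =
      (⨅ x ∈ X, ⨅ y ∈ Yx x, ⨆ ξv ∈ {ξv : Fin m → (Fin nξ → ℝ) | ∀ i, ξv i ∈ U},
        fCW gbar a b hi x y ξv) :=
    iInf_congr fun x => iInf_congr fun hx => key x hx
  refine ⟨key, h2, fun x hx => ?_⟩
  rw [key x hx, h2]
end

section
/- For every x ∈ X that is feasible for 2RO-C, there exist finitely many convex recourse-stable regions D_1,…,D_R ⊆ U (for x) with cl(D_1) ∪ … ∪ cl(D_R) = U and R ≤ Σ_{i=0}^{n_ξ} C(|H(x)|, i); in particular R ≤ Σ_{i=0}^{n_ξ} C(η, i), so R ∈ O(η^{n_ξ}). -/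
section

variable {nx ny nξ m : ℕ}

/-- Feasibility of `(x,y)` under scenario `ξ` for the structured constraint system
`A(ξ)x + B(ξ)y ≥ h(ξ)` with `h(ξ) = h + Hξ`, `A(ξ) = A + Σᵢ Aⁱξᵢ`, `B(ξ) = B + Σᵢ Bⁱξᵢ`. -/
def FeasS (hv : Fin m → ℤ) (H : Matrix (Fin m) (Fin nξ) ℤ)
    (A0 : Matrix (Fin m) (Fin nx) ℤ) (Ai : Fin nξ → Matrix (Fin m) (Fin nx) ℤ)
    (B0 : Matrix (Fin m) (Fin ny) ℤ) (Bi : Fin nξ → Matrix (Fin m) (Fin ny) ℤ)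
    (x : Fin nx → ℝ) (y : Fin ny → ℝ) (ξ : Fin nξ → ℝ) : Prop :=
  ∀ l, (hv l : ℝ) + ∑ i, (H l i : ℝ) * ξ i ≤
    (∑ j, ((A0 l j : ℝ) + ∑ i, ξ i * (Ai i l j : ℝ)) * x j) +
    ∑ j, ((B0 l j : ℝ) + ∑ i, ξ i * (Bi i l j : ℝ)) * y j

/-- `x` is feasible for the two-stage robust problem: every scenario admits a feasible
second-stage solution. -/
def Feasible2RO (hv : Fin m → ℤ) (H : Matrix (Fin m) (Fin nξ) ℤ)
    (A0 : Matrix (Fin m) (Fin nx) ℤ) (Ai : Fin nξ → Matrix (Fin m) (Fin nx) ℤ)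
    (B0 : Matrix (Fin m) (Fin ny) ℤ) (Bi : Fin nξ → Matrix (Fin m) (Fin ny) ℤ)
    (Yx : (Fin nx → ℝ) → Set (Fin ny → ℝ)) (U : Set (Fin nξ → ℝ))
    (x : Fin nx → ℝ) : Prop :=
  ∀ ξ ∈ U, ∃ y ∈ Yx x, FeasS hv H A0 Ai B0 Bi x y ξ

/-- A convex set `D` is recourse-stable for `x`. -/
def RecourseStableS (hv : Fin m → ℤ) (H : Matrix (Fin m) (Fin nξ) ℤ)
    (A0 : Matrix (Fin m) (Fin nx) ℤ) (Ai : Fin nξ → Matrix (Fin m) (Fin nx) ℤ)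
    (B0 : Matrix (Fin m) (Fin ny) ℤ) (Bi : Fin nξ → Matrix (Fin m) (Fin ny) ℤ)
    (Yx : (Fin nx → ℝ) → Set (Fin ny → ℝ))
    (x : Fin nx → ℝ) (D : Set (Fin nξ → ℝ)) : Prop :=
  ∀ y ∈ Yx x, (∀ ξ ∈ D, FeasS hv H A0 Ai B0 Bi x y ξ) ∨
    (∀ ξ ∈ D, ¬ FeasS hv H A0 Ai B0 Bi x y ξ)

/-- Coefficient vector `a_l(x,y)` of `ξ` in row `l` of the constraint system
`Σᵢ (Aⁱx + Bⁱy − Hᵢ)ξᵢ ≥ h − Ax − By`. -/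
def rowCoef (H : Matrix (Fin m) (Fin nξ) ℤ) (Ai : Fin nξ → Matrix (Fin m) (Fin nx) ℤ)
    (Bi : Fin nξ → Matrix (Fin m) (Fin ny) ℤ)
    (x : Fin nx → ℝ) (y : Fin ny → ℝ) (l : Fin m) : Fin nξ → ℝ :=
  fun i => (∑ j, (Ai i l j : ℝ) * x j) + (∑ j, (Bi i l j : ℝ) * y j) - (H l i : ℝ)

/-- Right-hand side `h_l(x,y)` of row `l`. -/
def rowRhs (hv : Fin m → ℤ) (A0 : Matrix (Fin m) (Fin nx) ℤ)
    (B0 : Matrix (Fin m) (Fin ny) ℤ)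
    (x : Fin nx → ℝ) (y : Fin ny → ℝ) (l : Fin m) : ℝ :=
  (hv l : ℝ) - (∑ j, (A0 l j : ℝ) * x j) - ∑ j, (B0 l j : ℝ) * y j

/-- The set `H(x)` of hyperplanes with nonzero normal induced by the constraint rows over all
`y ∈ Y(x)`, that intersect `U`. -/
def HypSet (hv : Fin m → ℤ) (H : Matrix (Fin m) (Fin nξ) ℤ)
    (A0 : Matrix (Fin m) (Fin nx) ℤ) (Ai : Fin nξ → Matrix (Fin m) (Fin nx) ℤ)
    (B0 : Matrix (Fin m) (Fin ny) ℤ) (Bi : Fin nξ → Matrix (Fin m) (Fin ny) ℤ)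
    (Yx : (Fin nx → ℝ) → Set (Fin ny → ℝ)) (U : Set (Fin nξ → ℝ))
    (x : Fin nx → ℝ) : Set (Set (Fin nξ → ℝ)) :=
  {P | ∃ y ∈ Yx x, ∃ l : Fin m, rowCoef H Ai Bi x y l ≠ 0 ∧
    P = {ξ | ∑ i, rowCoef H Ai Bi x y l i * ξ i = rowRhs hv A0 B0 x y l} ∧
    (P ∩ U).Nonempty}

end

/-!
Fix `x`. For a recourse `y`, row `l` of the constraint system reads `0 ≤ a ⬝ᵥ ξ - b`, so its
truth value can only change across the hyperplane `a ⬝ᵥ ξ = b`. The hyperplanes of `H(x)` that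
meet `U` without containing it cut `U` into open sign cells. A cell is convex and meets none of
these hyperplanes, so by convexity no row changes sign inside it; the cells are recourse-stable.
Points off all hyperplanes are dense in the convex set `U`, so the closures of the cells cover `U`.

The number of nonempty sign cells of `k` affine functionals on a `d`-dimensional affine space is
at most `∑ i ≤ d, C(k, i)`: dropping the first functional `f₀` identifies two cells only when the
sign vector of the others is realized on both sides of `f₀ = 0`, hence (by convexity) on the
hyperplane itself, which has dimension `d - 1`; Pascal's rule closes the induction.
-/

open Set Module

lemma sum_range_choose_succ_left (k d : ℕ) :
    ∑ i ∈ Finset.range (d + 1), (k + 1).choose i =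
      ∑ i ∈ Finset.range (d + 1), k.choose i + ∑ i ∈ Finset.range d, k.choose i := by
  rw [Finset.sum_range_succ', Finset.sum_range_succ' (fun i => k.choose i)]
  simp only [Nat.choose_succ_succ', Finset.sum_add_distrib, Nat.choose_zero_right]
  ring

lemma exists_affineSubspace_finrank_lt {𝕜 E : Type*} [Field 𝕜] [AddCommGroup E] [Module 𝕜 E]
    [FiniteDimensional 𝕜 E] (S : AffineSubspace 𝕜 E)
    (g : E →ᵃ[𝕜] 𝕜) {p q : E} (hp : p ∈ S) (hq : q ∈ S) (hpq : g p ≠ g q) :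
    ∃ S' : AffineSubspace 𝕜 E, {x | x ∈ S ∧ g x = 0} ⊆ S' ∧
      finrank 𝕜 S'.direction < finrank 𝕜 S.direction := by
  refine ⟨affineSpan 𝕜 {x | x ∈ S ∧ g x = 0}, subset_affineSpan 𝕜 _, ?_⟩
  have hle : (affineSpan 𝕜 {x | x ∈ S ∧ g x = 0}).direction ≤
      S.direction ⊓ LinearMap.ker g.linear := by
    rw [direction_affineSpan, vectorSpan_def, Submodule.span_le]
    rintro _ ⟨a, ⟨ha, hga⟩, b, ⟨hb, hgb⟩, rfl⟩
    refine ⟨S.vsub_mem_direction ha hb, ?_⟩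
    rw [SetLike.mem_coe, LinearMap.mem_ker, AffineMap.linearMap_vsub, hga, hgb, vsub_self]
  have hlt : S.direction ⊓ LinearMap.ker g.linear < S.direction := by
    refine inf_le_left.lt_of_ne fun h => hpq ?_
    have hpq' : p -ᵥ q ∈ S.direction ⊓ LinearMap.ker g.linear := by
      rw [h]
      exact S.vsub_mem_direction hp hq
    rw [Submodule.mem_inf, LinearMap.mem_ker, AffineMap.linearMap_vsub, vsub_eq_zero_iff_eq]
      at hpq'
    exact hpq'.2
  exact (Submodule.finrank_mono hle).trans_lt (Submodule.finrank_lt_finrank_of_lt hlt)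

section SignCells

variable {𝕜 E ι : Type*} [Field 𝕜] [LinearOrder 𝕜] [AddCommGroup E] [Module 𝕜 E]

def openHalfLine (b : Bool) : Set 𝕜 := if b then Ioi 0 else Iio 0

def signCell (f : ι → E →ᵃ[𝕜] 𝕜) (σ : ι → Bool) : Set E :=
  ⋂ i, f i ⁻¹' openHalfLine (σ i)

lemma ne_zero_of_mem_openHalfLine {b : Bool} {t : 𝕜} (h : t ∈ openHalfLine b) : t ≠ 0 := by
  cases b
  · exact ne_of_lt h
  · exact ne_of_gt h

lemma mem_signCell {f : ι → E →ᵃ[𝕜] 𝕜} {σ : ι → Bool} {x : E} :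
    x ∈ signCell f σ ↔ ∀ i, f i x ∈ openHalfLine (σ i) :=
  mem_iInter

lemma mem_openHalfLine_decide {t : 𝕜} (ht : t ≠ 0) : t ∈ openHalfLine (decide (0 < t)) := by
  rcases ht.lt_or_gt with h | h
  · simpa [openHalfLine, not_lt.2 h.le] using h
  · simp [openHalfLine, h]

lemma mem_signCell_cons {k : ℕ} {f : Fin (k + 1) → E →ᵃ[𝕜] 𝕜} {b : Bool} {τ : Fin k → Bool}
    {x : E} :
    x ∈ signCell f (Fin.cons b τ) ↔ f 0 x ∈ openHalfLine b ∧ x ∈ signCell (Fin.tail f) τ := by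
  simp [mem_signCell, Fin.forall_fin_succ, Fin.tail]

variable [IsStrictOrderedRing 𝕜]

lemma convex_openHalfLine (b : Bool) : Convex 𝕜 (openHalfLine (𝕜 := 𝕜) b) := by
  cases b
  · exact convex_Iio 0
  · exact convex_Ioi 0

lemma convex_signCell (f : ι → E →ᵃ[𝕜] 𝕜) (σ : ι → Bool) : Convex 𝕜 (signCell f σ) :=
  convex_iInter fun i => (convex_openHalfLine (σ i)).affine_preimage (f i)

lemma exists_zero_of_pos_of_neg {C : Set E} (hC : Convex 𝕜 C) (g : E →ᵃ[𝕜] 𝕜) {x y : E}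
    (hx : x ∈ C) (hy : y ∈ C) (hgx : 0 < g x) (hgy : g y < 0) : ∃ z ∈ C, g z = 0 := by
  have hden : 0 < g x - g y := by linarith
  set t := g x / (g x - g y)
  refine ⟨AffineMap.lineMap x y t, hC.lineMap_mem hx hy ⟨by positivity, ?_⟩, ?_⟩
  · exact (div_le_one hden).2 (by linarith)
  · rw [AffineMap.apply_lineMap, AffineMap.lineMap_apply_ring']
    simp only [t]
    field_simp
    ring

lemma pos_of_pos_of_forall_ne_zero {C : Set E} (hC : Convex 𝕜 C) {g : E →ᵃ[𝕜] 𝕜}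
    (hg : ∀ z ∈ C, g z ≠ 0) {x y : E} (hx : x ∈ C) (hy : y ∈ C) (hgx : 0 < g x) : 0 < g y := by
  by_contra! hgy
  obtain ⟨z, hz, hgz⟩ :=
    exists_zero_of_pos_of_neg hC g hx hy hgx (lt_of_le_of_ne hgy (hg y hy))
  exact hg z hz hgz

lemma exists_zero_mem_inter_signCell_tail {k : ℕ} {C : Set E} (hC : Convex 𝕜 C)
    {f : Fin (k + 1) → E →ᵃ[𝕜] 𝕜} {τ : Fin k → Bool} {x y : E}
    (hx : x ∈ C ∩ signCell f (Fin.cons true τ)) (hy : y ∈ C ∩ signCell f (Fin.cons false τ)) :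
    ∃ z ∈ C ∩ signCell (Fin.tail f) τ, f 0 z = 0 := by
  rw [mem_inter_iff, mem_signCell_cons] at hx hy
  exact exists_zero_of_pos_of_neg (hC.inter (convex_signCell _ τ)) (f 0) ⟨hx.1, hx.2.2⟩
    ⟨hy.1, hy.2.2⟩ hx.2.1 hy.2.1

theorem ncard_signCells_le [FiniteDimensional 𝕜 E] {k : ℕ} (f : Fin k → E →ᵃ[𝕜] 𝕜) (d : ℕ)
    (S : AffineSubspace 𝕜 E) (hS : finrank 𝕜 S.direction ≤ d) :
    {σ | ((S : Set E) ∩ signCell f σ).Nonempty}.ncard ≤ ∑ i ∈ Finset.range (d + 1), k.choose i := by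
  induction k generalizing d S with
  | zero =>
    calc _ ≤ Nat.card (Fin 0 → Bool) := Set.ncard_le_card _
      _ = 1 := by simp
      _ ≤ _ := by simp [Finset.sum_range_succ']
  | succ k ih =>
    set C := {σ | ((S : Set E) ∩ signCell f σ).Nonempty}
    set P := {τ | Fin.cons true τ ∈ C}
    set M := {τ | Fin.cons false τ ∈ C}
    have hC : C ⊆ Fin.cons true '' P ∪ Fin.cons false '' M := by
      intro σ hσ
      rw [← Fin.cons_self_tail σ] at hσ ⊢
      revert hσ
      cases σ 0
      · exact fun hσ => Or.inr ⟨_, hσ, rfl⟩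
      · exact fun hσ => Or.inl ⟨_, hσ, rfl⟩
    have hPM : P ∪ M ⊆ {τ | ((S : Set E) ∩ signCell (Fin.tail f) τ).Nonempty} := by
      rintro τ (⟨x, hxS, hx⟩ | ⟨x, hxS, hx⟩) <;> exact ⟨x, hxS, (mem_signCell_cons.1 hx).2⟩
    have hinter : (P ∩ M).ncard ≤ ∑ i ∈ Finset.range d, k.choose i := by
      rcases (P ∩ M).eq_empty_or_nonempty with hPM | ⟨τ₀, ⟨x, hxS, hx⟩, ⟨y, hyS, hy⟩⟩
      · simp [hPM]
      have hfx : 0 < f 0 x := (mem_signCell_cons.1 hx).1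
      have hfy : f 0 y < 0 := (mem_signCell_cons.1 hy).1
      obtain ⟨S', hS'S, hS'⟩ :=
        exists_affineSubspace_finrank_lt S (f 0) hxS hyS (hfy.trans hfx).ne'
      obtain ⟨d, rfl⟩ : ∃ d', d = d' + 1 := ⟨d - 1, by omega⟩
      refine (Set.ncard_le_ncard ?_).trans (ih (Fin.tail f) d S' (by omega))
      rintro τ ⟨⟨x, hx⟩, ⟨y, hy⟩⟩
      obtain ⟨z, ⟨hzS, hz⟩, hz0⟩ := exists_zero_mem_inter_signCell_tail S.convex hx hy
      exact ⟨z, hS'S ⟨hzS, hz0⟩, hz⟩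
    calc C.ncard ≤ (Fin.cons true '' P ∪ Fin.cons false '' M).ncard := Set.ncard_le_ncard hC
      _ ≤ P.ncard + M.ncard :=
        (Set.ncard_union_le _ _).trans (add_le_add (Set.ncard_image_le) (Set.ncard_image_le))
      _ = (P ∪ M).ncard + (P ∩ M).ncard := (Set.ncard_union_add_ncard_inter _ _).symm
      _ ≤ ∑ i ∈ Finset.range (d + 1), k.choose i + ∑ i ∈ Finset.range d, k.choose i :=
        add_le_add ((Set.ncard_le_ncard hPM).trans (ih _ d S hS)) hinter
      _ = _ := (sum_range_choose_succ_left k d).symm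

end SignCells

section Density

open Filter Topology

variable {E ι : Type*} [AddCommGroup E] [Module ℝ E]

lemma eventually_lineMap_ne_zero (g : E →ᵃ[ℝ] ℝ) {x u : E} (h : g x ≠ 0 ∨ g u ≠ 0) :
    ∀ᶠ t in 𝓝[>] (0 : ℝ), g (AffineMap.lineMap x u t) ≠ 0 := by
  simp_rw [AffineMap.apply_lineMap, AffineMap.lineMap_apply_ring']
  by_cases hx : g x = 0
  · filter_upwards [self_mem_nhdsWithin] with t (ht : 0 < t)
    simpa [hx] using ⟨ht.ne', h.resolve_left (not_not.2 hx)⟩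
  · apply eventually_nhdsWithin_of_eventually_nhds
    exact (Continuous.continuousAt (by fun_prop)).eventually_ne (by simpa using hx)

lemma Convex.exists_mem_forall_ne_zero {U : Set E} (hU : Convex ℝ U) (hUne : U.Nonempty)
    (f : ι → E →ᵃ[ℝ] ℝ) (s : Finset ι) (hf : ∀ i ∈ s, ∃ u ∈ U, f i u ≠ 0) :
    ∃ u ∈ U, ∀ i ∈ s, f i u ≠ 0 := by
  classical
  induction s using Finset.induction_on with
  | empty => exact hUne.imp fun u hu => ⟨hu, by simp⟩
  | insert j s _ ih =>
    obtain ⟨u, hu, hus⟩ := ih fun i hi => hf i (Finset.mem_insert_of_mem hi)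
    obtain ⟨w, hw, hwj⟩ := hf j (Finset.mem_insert_self j s)
    have hne : ∀ i ∈ insert j s, ∀ᶠ t in 𝓝[>] (0 : ℝ), f i (AffineMap.lineMap u w t) ≠ 0 := by
      intro i hi
      rcases Finset.mem_insert.1 hi with rfl | hi
      · exact eventually_lineMap_ne_zero _ (Or.inr hwj)
      · exact eventually_lineMap_ne_zero _ (Or.inl (hus i hi))
    obtain ⟨t, ht, ht1⟩ := (((eventually_all_finset _).2 hne).and (Ioo_mem_nhdsGT one_pos)).exists
    exact ⟨_, hU.lineMap_mem hu hw ⟨ht1.1.le, ht1.2.le⟩, ht⟩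

lemma Convex.subset_closure_inter_forall_ne_zero [TopologicalSpace E] [IsTopologicalAddGroup E]
    [ContinuousSMul ℝ E] [Finite ι] {U : Set E} (hU : Convex ℝ U) (f : ι → E →ᵃ[ℝ] ℝ)
    (hf : ∀ i, ∃ u ∈ U, f i u ≠ 0) : U ⊆ closure (U ∩ {z | ∀ i, f i z ≠ 0}) := by
  have := Fintype.ofFinite ι
  intro x hx
  obtain ⟨u, hu, hfu⟩ := hU.exists_mem_forall_ne_zero ⟨x, hx⟩ f Finset.univ fun i _ => hf i
  have hlim : Tendsto (AffineMap.lineMap x u) (𝓝[>] (0 : ℝ)) (𝓝 x) := by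
    simpa using (AffineMap.lineMap_continuous (R := ℝ)).continuousAt.tendsto.mono_left
      (nhdsWithin_le_nhds (a := (0 : ℝ)))
  refine mem_closure_of_tendsto hlim ?_
  filter_upwards [eventually_all.2 fun i => eventually_lineMap_ne_zero (f i)
    (Or.inr (hfu i (Finset.mem_univ i))), Ioo_mem_nhdsGT one_pos] with t ht ht1
  exact ⟨hU.lineMap_mem hx hu ⟨ht1.1.le, ht1.2.le⟩, ht⟩

end Density

theorem exists_convex_cover_avoiding_zeros {E : Type*} [AddCommGroup E] [Module ℝ E]
    [TopologicalSpace E] [IsTopologicalAddGroup E] [ContinuousSMul ℝ E] [FiniteDimensional ℝ E]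
    {U : Set E} (hUc : IsClosed U) (hU : Convex ℝ U) {k d : ℕ} (hd : finrank ℝ E ≤ d)
    (f : Fin k → E →ᵃ[ℝ] ℝ) (hf : ∀ i, ∃ u ∈ U, f i u ≠ 0) :
    ∃ (R : ℕ) (D : Fin R → Set E),
      (∀ t, D t ⊆ U ∧ Convex ℝ (D t) ∧ ∀ i, ∀ z ∈ D t, f i z ≠ 0) ∧
      ⋃ t, closure (D t) = U ∧ R ≤ ∑ i ∈ Finset.range (d + 1), k.choose i := by
  set cells := {σ | (U ∩ signCell f σ).Nonempty}
  let e := (Finite.equivFin cells).symm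
  refine ⟨Nat.card cells, fun t => U ∩ signCell f (e t), fun t => ⟨inter_subset_left,
    hU.inter (convex_signCell f _), fun i z hz => ne_zero_of_mem_openHalfLine
    (mem_signCell.1 hz.2 i)⟩, ?_, ?_⟩
  · refine (iUnion_subset fun t => closure_minimal inter_subset_left hUc).antisymm ?_
    rw [← closure_iUnion_of_finite]
    refine (hU.subset_closure_inter_forall_ne_zero f hf).trans (closure_mono ?_)
    rintro z ⟨hzU, hz⟩
    have hzσ : z ∈ signCell f fun i => decide (0 < f i z) :=
      mem_signCell.2 fun i => mem_openHalfLine_decide (hz i)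
    refine mem_iUnion.2 ⟨e.symm ⟨_, z, hzU, hzσ⟩, ?_⟩
    rw [Equiv.apply_symm_apply]
    exact ⟨hzU, hzσ⟩
  · have hsub : cells ⊆ {σ | (((⊤ : AffineSubspace ℝ E) : Set E) ∩ signCell f σ).Nonempty} :=
      fun σ ⟨z, _, hz⟩ => ⟨z, trivial, hz⟩
    rw [Nat.card_coe_set_eq]
    refine (Set.ncard_le_ncard hsub).trans (ncard_signCells_le f d ⊤ ?_)
    rwa [AffineSubspace.direction_top, finrank_top]

noncomputable def dotProductAffine {ι : Type*} [Fintype ι] (a : ι → ℝ) (b : ℝ) :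
    (ι → ℝ) →ᵃ[ℝ] ℝ :=
  (dotProductBilin ℝ ℝ a).toAffineMap - AffineMap.const ℝ (ι → ℝ) b

@[simp]
lemma dotProductAffine_apply {ι : Type*} [Fintype ι] (a : ι → ℝ) (b : ℝ) (ξ : ι → ℝ) :
    dotProductAffine a b ξ = a ⬝ᵥ ξ - b :=
  rfl

section RobustProblem

variable {nx ny nξ m : ℕ} (hv : Fin m → ℤ) (H : Matrix (Fin m) (Fin nξ) ℤ)
  (A0 : Matrix (Fin m) (Fin nx) ℤ) (Ai : Fin nξ → Matrix (Fin m) (Fin nx) ℤ)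
  (B0 : Matrix (Fin m) (Fin ny) ℤ) (Bi : Fin nξ → Matrix (Fin m) (Fin ny) ℤ)
  (Yx : (Fin nx → ℝ) → Set (Fin ny → ℝ)) (x : Fin nx → ℝ)

lemma feasS_iff (y : Fin ny → ℝ) (ξ : Fin nξ → ℝ) :
    FeasS hv H A0 Ai B0 Bi x y ξ ↔
      ∀ l, 0 ≤ dotProductAffine (rowCoef H Ai Bi x y l) (rowRhs hv A0 B0 x y l) ξ := by
  refine forall_congr' fun l => ?_
  rw [dotProductAffine_apply, ← sub_nonneg]
  convert Iff.rfl using 2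
  simp only [rowCoef, rowRhs, dotProduct, add_mul, sub_mul, Finset.sum_add_distrib,
    Finset.sum_sub_distrib, Finset.sum_mul]
  rw [Finset.sum_comm (γ := Fin nx), Finset.sum_comm (γ := Fin ny)]
  simp only [mul_comm, mul_left_comm]
  ring

variable {Yx x} in
lemma hypSet_finite (U : Set (Fin nξ → ℝ)) {Y : Set (Fin ny → ℝ)} (hY : Y.Finite)
    (hYx : Yx x ⊆ Y) : (HypSet hv H A0 Ai B0 Bi Yx U x).Finite := by
  refine ((hY.prod (finite_univ (α := Fin m))).image fun p =>
    {ξ | ∑ i, rowCoef H Ai Bi x p.1 p.2 i * ξ i = rowRhs hv A0 B0 x p.1 p.2}).subset ?_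
  rintro P ⟨y, hy, l, -, rfl, -⟩
  exact ⟨(y, l), ⟨hYx hy, mem_univ l⟩, rfl⟩

lemma exists_zero_set_eq_of_mem_hypSet {U P : Set (Fin nξ → ℝ)}
    (hP : P ∈ HypSet hv H A0 Ai B0 Bi Yx U x) :
    ∃ g : (Fin nξ → ℝ) →ᵃ[ℝ] ℝ, ∀ ξ, g ξ = 0 ↔ ξ ∈ P := by
  obtain ⟨y, -, l, -, rfl, -⟩ := hP
  exact ⟨dotProductAffine (rowCoef H Ai Bi x y l) (rowRhs hv A0 B0 x y l),
    fun ξ => by simp [sub_eq_zero, dotProduct]⟩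

variable {U D : Set (Fin nξ → ℝ)} (hDU : D ⊆ U) (hD : Convex ℝ D)
  (hdisj : ∀ P ∈ HypSet hv H A0 Ai B0 Bi Yx U x, ¬U ⊆ P → Disjoint D P)
include hDU hD hdisj

lemma dotProductAffine_row_nonneg_of_disjoint {y : Fin ny → ℝ} (hy : y ∈ Yx x) (l : Fin m)
    {ξ ξ' : Fin nξ → ℝ} (hξ : ξ ∈ D) (hξ' : ξ' ∈ D)
    (h : 0 ≤ dotProductAffine (rowCoef H Ai Bi x y l) (rowRhs hv A0 B0 x y l) ξ) :
    0 ≤ dotProductAffine (rowCoef H Ai Bi x y l) (rowRhs hv A0 B0 x y l) ξ' := by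
  set g := dotProductAffine (rowCoef H Ai Bi x y l) (rowRhs hv A0 B0 x y l)
  by_cases hg : ∀ ζ ∈ D, g ζ ≠ 0
  · exact (pos_of_pos_of_forall_ne_zero hD hg hξ hξ' (h.lt_of_ne (hg ξ hξ).symm)).le
  push Not at hg
  obtain ⟨ζ, hζ, hgζ⟩ := hg
  by_cases ha : rowCoef H Ai Bi x y l = 0
  · simpa [g, ha] using h
  set P := {ξ : Fin nξ → ℝ | ∑ i, rowCoef H Ai Bi x y l i * ξ i = rowRhs hv A0 B0 x y l}
  have hgP : ∀ ξ, g ξ = 0 ↔ ξ ∈ P := fun ξ => by simp [g, P, sub_eq_zero, dotProduct]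
  by_cases hUP : U ⊆ P
  · exact ((hgP ξ').2 (hUP (hDU hξ'))).ge
  · have hP : P ∈ HypSet hv H A0 Ai B0 Bi Yx U x :=
      ⟨y, hy, l, ha, rfl, ζ, (hgP ζ).1 hgζ, hDU hζ⟩
    exact absurd ((hgP ζ).1 hgζ) (disjoint_left.1 (hdisj P hP hUP) hζ)

lemma recourseStableS_of_disjoint : RecourseStableS hv H A0 Ai B0 Bi Yx x D := by
  intro y hy
  by_cases h : ∃ ξ₀ ∈ D, FeasS hv H A0 Ai B0 Bi x y ξ₀
  · obtain ⟨ξ₀, hξ₀, hF⟩ := h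
    refine Or.inl fun ξ hξ => (feasS_iff ..).2 fun l => ?_
    exact dotProductAffine_row_nonneg_of_disjoint hv H A0 Ai B0 Bi Yx x hDU hD hdisj hy l hξ₀ hξ
      ((feasS_iff ..).1 hF l)
  · exact Or.inr fun ξ hξ hF => h ⟨ξ, hξ, hF⟩

end RobustProblem

theorem stmt_8_general (nx ny nξ m : ℕ)
    (X : Set (Fin nx → ℝ))
    (Y : Set (Fin ny → ℝ)) (hYfin : Y.Finite)
    (Yx : (Fin nx → ℝ) → Set (Fin ny → ℝ))
    (hYxsub : ∀ x ∈ X, Yx x ⊆ Y)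
    (U : Set (Fin nξ → ℝ)) (hUcomp : IsCompact U) (hUconv : Convex ℝ U)
    (hv : Fin m → ℤ) (H : Matrix (Fin m) (Fin nξ) ℤ)
    (A0 : Matrix (Fin m) (Fin nx) ℤ) (Ai : Fin nξ → Matrix (Fin m) (Fin nx) ℤ)
    (B0 : Matrix (Fin m) (Fin ny) ℤ) (Bi : Fin nξ → Matrix (Fin m) (Fin ny) ℤ) :
    ∀ x ∈ X, Feasible2RO hv H A0 Ai B0 Bi Yx U x →
      ∃ (R : ℕ) (D : Fin R → Set (Fin nξ → ℝ)),
        (∀ t, D t ⊆ U ∧ Convex ℝ (D t) ∧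
          RecourseStableS hv H A0 Ai B0 Bi Yx x (D t)) ∧
        (⋃ t, closure (D t)) = U ∧
        R ≤ ∑ i ∈ Finset.range (nξ + 1),
          Nat.choose ((HypSet hv H A0 Ai B0 Bi Yx U x).ncard) i ∧
        ∀ η : ℕ, 1 ≤ η →
          (∀ x' ∈ X, Feasible2RO hv H A0 Ai B0 Bi Yx U x' →
            (HypSet hv H A0 Ai B0 Bi Yx U x').ncard ≤ η) →
          R ≤ ∑ i ∈ Finset.range (nξ + 1), Nat.choose η i := by
  intro x hx hfeas
  set K := HypSet hv H A0 Ai B0 Bi Yx U x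
  have hK : K.Finite := hypSet_finite hv H A0 Ai B0 Bi U hYfin (hYxsub x hx)
  -- a hyperplane containing `U` would leave no cell inside `U`
  set G := {P ∈ K | ¬U ⊆ P}
  have : Finite G := (hK.subset fun _ hP => hP.1).to_subtype
  choose g hg using fun P : G => exists_zero_set_eq_of_mem_hypSet hv H A0 Ai B0 Bi Yx x P.2.1
  let e := (Finite.equivFin G).symm
  obtain ⟨R, D, hD, hcover, hR⟩ := exists_convex_cover_avoiding_zeros hUcomp.isClosed hUconv
    (d := nξ) (by simp) (fun i => g (e i)) fun i => by
      obtain ⟨u, hu, hup⟩ := not_subset.1 (e i).2.2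
      exact ⟨u, hu, fun h => hup ((hg _ u).1 h)⟩
  have hRK : R ≤ ∑ i ∈ Finset.range (nξ + 1), K.ncard.choose i := by
    refine hR.trans (Finset.sum_le_sum fun i _ => Nat.choose_le_choose i ?_)
    exact (Nat.card_coe_set_eq G).trans_le (ncard_le_ncard (fun _ hP => hP.1) hK)
  refine ⟨R, D, fun t => ⟨(hD t).1, (hD t).2.1, ?_⟩, hcover, hRK, fun η _ hη =>
    hRK.trans (Finset.sum_le_sum fun i _ => Nat.choose_le_choose i (hη x hx hfeas))⟩
  refine recourseStableS_of_disjoint hv H A0 Ai B0 Bi Yx x (hD t).1 (hD t).2.1 fun P hP hUP => ?_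
  refine disjoint_left.2 fun ξ hξ hξP => (hD t).2.2 (e.symm ⟨P, hP, hUP⟩) ξ hξ ?_
  rwa [Equiv.apply_symm_apply, hg]

/-- For every `x ∈ X` feasible for the two-stage robust problem there are
finitely many convex recourse-stable regions whose closures cover `U`, their number `R` being at
most `Σ_{i=0}^{n_ξ} C(|H(x)|, i)`; in particular `R ≤ Σ_{i=0}^{n_ξ} C(η, i)` for every `η ≥ 1`
bounding `|H(x')|` over all feasible `x'`. -/
theorem stmt_8 (nx ny nξ m : ℕ) (hnx : 0 < nx) (hny : 0 < ny) (hnξ : 0 < nξ) (hm0 : 0 < m)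
    (X : Set (Fin nx → ℝ)) (hXcomp : IsCompact X) (hXne : X.Nonempty)
    (Y : Set (Fin ny → ℝ)) (hYfin : Y.Finite) (hYne : Y.Nonempty)
    (hYint : ∀ y ∈ Y, ∀ i, ∃ z : ℤ, y i = (z : ℝ))
    (Yx : (Fin nx → ℝ) → Set (Fin ny → ℝ))
    (hYxsub : ∀ x ∈ X, Yx x ⊆ Y) (hYxne : ∀ x ∈ X, (Yx x).Nonempty)
    (U : Set (Fin nξ → ℝ)) (hUcomp : IsCompact U) (hUconv : Convex ℝ U) (hUne : U.Nonempty)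
    (hv : Fin m → ℤ) (H : Matrix (Fin m) (Fin nξ) ℤ)
    (A0 : Matrix (Fin m) (Fin nx) ℤ) (Ai : Fin nξ → Matrix (Fin m) (Fin nx) ℤ)
    (B0 : Matrix (Fin m) (Fin ny) ℤ) (Bi : Fin nξ → Matrix (Fin m) (Fin ny) ℤ) :
    ∀ x ∈ X, Feasible2RO hv H A0 Ai B0 Bi Yx U x →
      ∃ (R : ℕ) (D : Fin R → Set (Fin nξ → ℝ)),
        (∀ t, D t ⊆ U ∧ Convex ℝ (D t) ∧
          RecourseStableS hv H A0 Ai B0 Bi Yx x (D t)) ∧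
        (⋃ t, closure (D t)) = U ∧
        R ≤ ∑ i ∈ Finset.range (nξ + 1),
          Nat.choose ((HypSet hv H A0 Ai B0 Bi Yx U x).ncard) i ∧
        ∀ η : ℕ, 1 ≤ η →
          (∀ x' ∈ X, Feasible2RO hv H A0 Ai B0 Bi Yx U x' →
            (HypSet hv H A0 Ai B0 Bi Yx U x').ncard ≤ η) →
          R ≤ ∑ i ∈ Finset.range (nξ + 1), Nat.choose η i :=
  stmt_8_general nx ny nξ m X Y hYfin Yx hYxsub U hUcomp hUconv hv H A0 Ai B0 Bi
end

section
/- Let n ≥ 1 and let Δ = {ξ ∈ ℝⁿ : ξ_i ≥ 0 for all i, Σ_{i=1}^n ξ_i = 1} be the standard simplex. For every nonempty subset S ⊆ [n], max_{ξ∈Δ} min_{i∈S} ξ_i = 1/|S|. Consequently, for the solution set Y = {e_1,…,e_n} of unit vectors, the k-adaptability value opt(k) = min over (y¹,…,y^k) ∈ Y^k of max_{ξ∈Δ} min_{i∈[k]} ξᵀy^i equals 1/min(k,n) for every k ≥ 1; in particular for n ≥ 2, opt(n−1) = 1/(n−1) > 1/n = opt(n), so at least k = n policies are needed for optimality. -/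
/-- The `k`-adaptability (min-max-min) value over the standard simplex with solution set the
unit vectors: `opt(k) = min_{y¹,…,y^k ∈ {e₁,…,e_n}} max_{ξ ∈ Δ} min_{i ∈ [k]} ξᵀyⁱ`. -/
noncomputable def simplexOpt (n k : ℕ) : ℝ :=
  sInf {v : ℝ | ∃ y : Fin k → (Fin n → ℝ),
    (∀ i, ∃ j : Fin n, y i = fun l => if l = j then 1 else 0) ∧
    v = sSup {w : ℝ | ∃ ξ ∈ stdSimplex ℝ (Fin n), w = ⨅ i : Fin k, ∑ l, ξ l * y i l}}

open Classical in
lemma stmt17_part1 (n : ℕ) (S : Set (Fin n)) (hS : S.Nonempty) :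
    IsGreatest {v : ℝ | ∃ ξ ∈ stdSimplex ℝ (Fin n), v = sInf ((fun i => ξ i) '' S)}
      (1 / (S.ncard : ℝ)) := by
  have hfin : S.Finite := S.toFinite
  have hm : 0 < S.ncard := (Set.ncard_pos hfin).mpr hS
  have hmR : (0:ℝ) < (S.ncard : ℝ) := by exact_mod_cast hm
  constructor
  · refine ⟨fun i => if i ∈ S then 1 / (S.ncard : ℝ) else 0, ⟨?_, ?_⟩, ?_⟩
    · intro i; dsimp; split <;> positivity
    · simp only [← Set.mem_toFinset]
      rw [Finset.sum_ite_mem]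
      rw [Finset.sum_const]
      have : (Finset.univ ∩ S.toFinset).card = S.ncard := by
        rw [Finset.univ_inter, Set.ncard_eq_toFinset_card']
      rw [this, nsmul_eq_mul]
      field_simp
    · have himg : (fun i => if i ∈ S then 1 / (S.ncard : ℝ) else 0) '' S
          = {1 / (S.ncard : ℝ)} := by
        ext v
        constructor
        · rintro ⟨i, hi, rfl⟩; simp [hi]
        · rintro rfl; exact ⟨hS.choose, hS.choose_spec, by simp [hS.choose_spec]⟩
      rw [himg, csInf_singleton]
  · rintro v ⟨ξ, hξ, rfl⟩
    have hbdd : BddBelow ((fun i => ξ i) '' S) := (hfin.image _).bddBelow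
    have hle : ∀ i ∈ S, sInf ((fun i => ξ i) '' S) ≤ ξ i := fun i hi =>
      csInf_le hbdd ⟨i, hi, rfl⟩
    have hsum : (S.ncard : ℝ) * sInf ((fun i => ξ i) '' S) ≤ ∑ i ∈ S.toFinset, ξ i := by
      calc (S.ncard : ℝ) * sInf ((fun i => ξ i) '' S)
          = ∑ _i ∈ S.toFinset, sInf ((fun i => ξ i) '' S) := by
            rw [Finset.sum_const, Set.ncard_eq_toFinset_card', nsmul_eq_mul]
        _ ≤ ∑ i ∈ S.toFinset, ξ i :=
            Finset.sum_le_sum (fun i hi => hle i (Set.mem_toFinset.mp hi))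
    have hsum1 : ∑ i ∈ S.toFinset, ξ i ≤ 1 := by
      rw [← hξ.2]
      exact Finset.sum_le_sum_of_subset_of_nonneg (Finset.subset_univ _)
        (fun i _ _ => hξ.1 i)
    rw [le_div_iff₀ hmR, mul_comm]
    linarith

lemma stmt17_inner (n k : ℕ) (hk : 1 ≤ k) (j : Fin k → Fin n) :
    sSup {w : ℝ | ∃ ξ ∈ stdSimplex ℝ (Fin n),
        w = ⨅ i : Fin k, ∑ l, ξ l * (if l = j i then (1:ℝ) else 0)}
      = 1 / (((Set.range j).ncard : ℝ)) := by
  haveI : Nonempty (Fin k) := ⟨⟨0, hk⟩⟩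
  have key : ∀ ξ : Fin n → ℝ, (⨅ i : Fin k, ∑ l, ξ l * (if l = j i then (1:ℝ) else 0))
      = sInf ((fun i => ξ i) '' Set.range j) := by
    intro ξ
    have hsum : ∀ i : Fin k, ∑ l, ξ l * (if l = j i then (1:ℝ) else 0) = ξ (j i) := by
      intro i; simp [mul_ite]
    simp only [hsum]
    rw [← Set.range_comp, ← sInf_range]
    rfl
  have hset : {w : ℝ | ∃ ξ ∈ stdSimplex ℝ (Fin n),
        w = ⨅ i : Fin k, ∑ l, ξ l * (if l = j i then (1:ℝ) else 0)}
      = {v : ℝ | ∃ ξ ∈ stdSimplex ℝ (Fin n), v = sInf ((fun i => ξ i) '' Set.range j)} := by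
    ext w
    exact ⟨fun ⟨ξ, hξ, hw⟩ => ⟨ξ, hξ, hw.trans (key ξ)⟩,
      fun ⟨ξ, hξ, hw⟩ => ⟨ξ, hξ, hw.trans (key ξ).symm⟩⟩
  rw [hset]
  exact (stmt17_part1 n (Set.range j) (Set.range_nonempty j)).csSup_eq

lemma stmt17_part2 (n k : ℕ) (hn : 1 ≤ n) (hk : 1 ≤ k) :
    simplexOpt n k = 1 / ((min k n : ℕ) : ℝ) := by
  have hmin : 0 < min k n := lt_min hk hn
  apply IsLeast.csInf_eq
  constructor
  · refine ⟨fun i l => if l = (⟨i % n, Nat.mod_lt _ (by omega)⟩ : Fin n) then 1 else 0,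
      fun i => ⟨_, rfl⟩, ?_⟩
    set j0 : Fin k → Fin n := fun i => ⟨i % n, Nat.mod_lt _ (by omega)⟩ with hj0
    have hcard : (Set.range j0).ncard = min k n := by
      rcases le_total k n with hkn | hnk
      · have hinj : Function.Injective j0 := by
          intro a b hab
          apply Fin.ext
          have ha : (a : ℕ) % n = a := Nat.mod_eq_of_lt (by omega)
          have hb : (b : ℕ) % n = b := Nat.mod_eq_of_lt (by omega)
          have : (a : ℕ) % n = (b : ℕ) % n := congrArg Fin.val hab
          omega
        rw [← Set.image_univ, Set.ncard_image_of_injective _ hinj, Set.ncard_univ,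
          Nat.card_eq_fintype_card, Fintype.card_fin, min_eq_left hkn]
      · have hsurj : Function.Surjective j0 := by
          intro m
          refine ⟨⟨m, by omega⟩, ?_⟩
          apply Fin.ext
          simp [hj0, Nat.mod_eq_of_lt m.isLt]
        rw [Set.range_eq_univ.mpr hsurj, Set.ncard_univ, Nat.card_eq_fintype_card,
          Fintype.card_fin, min_eq_right hnk]
    rw [stmt17_inner n k hk j0] at *
    rw [hcard]
  · rintro v ⟨y, hy, rfl⟩
    have hj : ∀ i, y i = fun l => if l = (hy i).choose then (1:ℝ) else 0 :=
      fun i => (hy i).choose_spec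
    set j : Fin k → Fin n := fun i => (hy i).choose with hjdef
    have hyy : y = fun i l => if l = j i then (1:ℝ) else 0 := funext fun i => hj i
    rw [hyy, stmt17_inner n k hk j]
    have h1 : (Set.range j).ncard ≤ k := by
      rw [← Set.image_univ]
      calc (j '' Set.univ).ncard ≤ (Set.univ : Set (Fin k)).ncard :=
            Set.ncard_image_le Set.finite_univ
        _ = k := by rw [Set.ncard_univ, Nat.card_eq_fintype_card, Fintype.card_fin]
    have h2 : (Set.range j).ncard ≤ n := by
      calc (Set.range j).ncard ≤ (Set.univ : Set (Fin n)).ncard :=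
            Set.ncard_le_ncard (Set.subset_univ _) Set.finite_univ
        _ = n := by rw [Set.ncard_univ, Nat.card_eq_fintype_card, Fintype.card_fin]
    haveI : Nonempty (Fin k) := ⟨⟨0, hk⟩⟩
    have hpos : 0 < (Set.range j).ncard :=
      (Set.ncard_pos (Set.toFinite _)).mpr (Set.range_nonempty _)
    apply one_div_le_one_div_of_le
    · exact_mod_cast hpos
    · exact_mod_cast le_min h1 h2

/-- On the standard simplex `Δ ⊆ ℝⁿ`, `max_{ξ∈Δ} min_{i∈S} ξᵢ = 1/|S|` for
every nonempty `S ⊆ [n]`; consequently the min-max-min value with the unit vectors as solutions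
equals `1/min(k,n)` for every `k ≥ 1`, and for `n ≥ 2` we get
`opt(n−1) = 1/(n−1) > 1/n = opt(n)`, so `n` policies are needed for optimality. -/
theorem stmt_17 (n : ℕ) (hn : 1 ≤ n) :
    (∀ S : Set (Fin n), S.Nonempty →
      IsGreatest {v : ℝ | ∃ ξ ∈ stdSimplex ℝ (Fin n), v = sInf ((fun i => ξ i) '' S)}
        (1 / (S.ncard : ℝ))) ∧
    (∀ k : ℕ, 1 ≤ k → simplexOpt n k = 1 / ((min k n : ℕ) : ℝ)) ∧
    (2 ≤ n →
      simplexOpt n (n - 1) = 1 / ((n : ℝ) - 1) ∧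
      simplexOpt n n = 1 / (n : ℝ) ∧
      simplexOpt n n < simplexOpt n (n - 1)) := by
  refine ⟨fun S hS => stmt17_part1 n S hS, fun k hk => stmt17_part2 n k hn hk, fun h2 => ?_⟩
  have e1 : simplexOpt n (n - 1) = 1 / ((n : ℝ) - 1) := by
    rw [stmt17_part2 n (n - 1) hn (by omega), min_eq_left (by omega)]
    congr 1
    push_cast [Nat.cast_sub hn]
    ring
  have e2 : simplexOpt n n = 1 / (n : ℝ) := by
    rw [stmt17_part2 n n hn hn, min_self]
  refine ⟨e1, e2, ?_⟩
  rw [e1, e2]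
  apply one_div_lt_one_div_of_lt
  · have : (2:ℝ) ≤ (n:ℝ) := by exact_mod_cast h2
    linarith
  · have : (0:ℝ) < (n:ℝ) := by exact_mod_cast (by omega : 0 < n)
    linarith
end
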